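/- arXiv:2208.05105 — 13 statements merged into one kernel-verified Lean document; each statement's English description precedes it below -/
import Mathlib

section
/- If X is a weakly regular k-space, then X is weakly compact-bounded if and only if X is feebly compact. -/
open Set Topology TopologicalSpace

def CompactBounded (X : Type*) [TopologicalSpace X] : Prop :=
  ∀ U : ℕ → Set X, (∀ n, IsOpen (U n)) → (∀ n, (U n).Nonempty) →
    ∃ K : Set X, IsCompact K ∧ ∀ n, (K ∩ U n).Nonempty

def WeaklyCompactBounded (X : Type*) [TopologicalSpace X] : Prop :=
  ∀ U : ℕ → Set X, (∀ n, IsOpen (U n)) → (∀ n, (U n).Nonempty) →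
    ∃ K : Set X, IsCompact K ∧ {n : ℕ | (K ∩ U n).Nonempty}.Infinite

def FeeblyCompact (X : Type*) [TopologicalSpace X] : Prop :=
  ∀ S : Set (Set X), (∀ U ∈ S, IsOpen U ∧ U.Nonempty) →
    (∀ x : X, ∃ V ∈ nhds x, {U ∈ S | (U ∩ V).Nonempty}.Finite) → S.Finite

def WeaklyRegular (X : Type*) [TopologicalSpace X] : Prop :=
  ∀ U : Set X, IsOpen U → U.Nonempty → ∃ V : Set X, IsOpen V ∧ V.Nonempty ∧ closure V ⊆ U

def KSpace (X : Type*) [TopologicalSpace X] : Prop :=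
  ∀ A : Set X, (∀ K : Set X, IsCompact K → ∃ C : Set X, IsClosed C ∧ A ∩ K = C ∩ K) → IsClosed A

def RPseudocompactIn {X : Type*} [TopologicalSpace X] (A : Set X) : Prop :=
  ∀ U : ℕ → Set X, (∀ n, IsOpen (U n)) → (∀ n, (U n ∩ A).Nonempty) →
    ∃ a ∈ A, ∀ V ∈ nhds a, {n : ℕ | (U n ∩ V).Nonempty}.Infinite

def RWeaklyCompactBoundedIn {X : Type*} [TopologicalSpace X] (A : Set X) : Prop :=
  ∀ U : ℕ → Set X, (∀ n, IsOpen (U n)) → (∀ n, (U n ∩ A).Nonempty) →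
    ∃ K : Set X, K ⊆ A ∧ IsCompact K ∧ {n : ℕ | (U n ∩ K).Nonempty}.Infinite

def StronglyRPseudocompactIn {X : Type*} [TopologicalSpace X] (A : Set X) : Prop :=
  ∀ (Y : Type) [TopologicalSpace Y] (B : Set Y), RPseudocompactIn B →
    RPseudocompactIn (A ×ˢ B)


lemma exists_cluster_pt {X : Type*} [TopologicalSpace X] (hf : FeeblyCompact X)
    (V : ℕ → Set X) (hVo : ∀ n, IsOpen (V n)) (hVne : ∀ n, (V n).Nonempty) :
    ∃ x : X, ∀ W ∈ nhds x, {n : ℕ | (V n ∩ W).Nonempty}.Infinite := by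
  by_contra h
  push_neg at h
  have h' : ∀ x : X, ∃ W ∈ nhds x, {n : ℕ | (V n ∩ W).Nonempty}.Finite := by
    intro x
    obtain ⟨W, hW, hfin⟩ := h x
    exact ⟨W, hW, hfin⟩
  have hrange : (Set.range V).Finite := by
    apply hf
    · rintro U ⟨n, rfl⟩
      exact ⟨hVo n, hVne n⟩
    · intro x
      obtain ⟨W, hW, hfin⟩ := h' x
      refine ⟨W, hW, ?_⟩
      have : {U ∈ Set.range V | (U ∩ W).Nonempty} ⊆ V '' {n : ℕ | (V n ∩ W).Nonempty} := by
        rintro U ⟨⟨n, rfl⟩, hne⟩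
        exact ⟨n, hne, rfl⟩
      exact (hfin.image V).subset this
  haveI : Finite (Set.range V) := hrange.to_subtype
  obtain ⟨B, hB⟩ := Finite.exists_infinite_fiber (fun n : ℕ => (⟨V n, Set.mem_range_self n⟩ : Set.range V))
  have hB' := Set.infinite_coe_iff.mp hB
  have hBinf : {n : ℕ | V n = (B : Set X)}.Infinite := by
    apply Set.Infinite.mono _ hB'
    intro n hn
    have : (⟨V n, Set.mem_range_self n⟩ : Set.range V) = B := hn
    simpa using congrArg Subtype.val this
  obtain ⟨n₀, hn₀⟩ := hBinf.nonempty
  obtain ⟨x, hx⟩ : (V n₀).Nonempty := hVne n₀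
  obtain ⟨W, hW, hfin⟩ := h' x
  apply Set.not_infinite.mpr hfin
  apply Set.Infinite.mono _ hBinf
  intro n hn
  have hxW : x ∈ W := mem_of_mem_nhds hW
  have : x ∈ V n := by rw [Set.mem_setOf_eq.mp hn, ← hn₀]; exact hx
  exact ⟨x, this, hxW⟩

theorem wcb_iff_feebly_compact {X : Type*} [TopologicalSpace X]
    (h1 : WeaklyRegular X) (h2 : KSpace X) :
    WeaklyCompactBounded X ↔ FeeblyCompact X := by
  constructor
  · -- WCB → FeeblyCompact
    intro hwcb S hS hlf
    by_contra hinf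
    have hSinf : S.Infinite := hinf
    let e := hSinf.natEmbedding
    set U : ℕ → Set X := fun n => (e n : Set X) with hU
    have hUo : ∀ n, IsOpen (U n) := fun n => (hS _ (e n).2).1
    have hUne : ∀ n, (U n).Nonempty := fun n => (hS _ (e n).2).2
    obtain ⟨K, hKc, hKinf⟩ := hwcb U hUo hUne
    -- K meets only finitely many members of S
    choose V hVnhds hVfin using hlf
    obtain ⟨t, ht⟩ := hKc.elim_nhds_subcover V (fun x _ => hVnhds x)
    have hfin : {W ∈ S | (W ∩ K).Nonempty}.Finite := by
      apply Set.Finite.subset (Set.Finite.biUnion t.finite_toSet (fun x _ => hVfin x))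
      rintro W ⟨hWS, y, hyW, hyK⟩
      obtain ⟨x, hxt, hyV⟩ := Set.mem_iUnion₂.mp (ht.2 hyK)
      exact Set.mem_biUnion hxt ⟨hWS, y, hyW, hyV⟩
    apply Set.not_infinite.mpr hfin
    have : (fun n => U n) '' {n : ℕ | (K ∩ U n).Nonempty} ⊆ {W ∈ S | (W ∩ K).Nonempty} := by
      rintro W ⟨n, hn, rfl⟩
      obtain ⟨y, hyK, hyU⟩ := hn
      exact ⟨(e n).2, y, hyU, hyK⟩
    refine Set.Infinite.mono this (Set.Infinite.image ?_ hKinf)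
    intro a _ b _ hab
    have : e a = e b := Subtype.ext hab
    exact e.injective this
  · -- FeeblyCompact → WCB
    intro hfc U hUo hUne
    by_contra hcon
    push_neg at hcon
    have hKfin : ∀ K : Set X, IsCompact K → {n : ℕ | (K ∩ U n).Nonempty}.Finite := by
      intro K hK
      exact hcon K hK
    choose V hVo hVne hVcl using fun n => h1 (U n) (hUo n) (hUne n)
    -- The tails of closures are closed
    have hAclosed : ∀ k : ℕ, IsClosed (⋃ n, ⋃ (_ : k ≤ n), closure (V n)) := by
      intro k
      apply h2
      intro K hK
      refine ⟨⋃ n ∈ {n : ℕ | k ≤ n ∧ (K ∩ U n).Nonempty}, closure (V n), ?_, ?_⟩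
      · apply Set.Finite.isClosed_biUnion
        · exact (hKfin K hK).subset (fun n hn => hn.2)
        · exact fun n _ => isClosed_closure
      · ext x
        simp only [Set.mem_inter_iff, Set.mem_iUnion, Set.mem_setOf_eq]
        constructor
        · rintro ⟨⟨n, hkn, hxcl⟩, hxK⟩
          exact ⟨⟨n, ⟨hkn, ⟨x, hxK, hVcl n hxcl⟩⟩, hxcl⟩, hxK⟩
        · rintro ⟨⟨n, ⟨hkn, _⟩, hxcl⟩, hxK⟩
          exact ⟨⟨n, hkn, hxcl⟩, hxK⟩
    obtain ⟨x₀, hx₀⟩ := exists_cluster_pt hfc V hVo hVne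
    -- x₀ belongs to every tail
    have hx₀A : ∀ k : ℕ, ∃ n, k ≤ n ∧ x₀ ∈ closure (V n) := by
      intro k
      have hmem : x₀ ∈ (⋃ n, ⋃ (_ : k ≤ n), closure (V n)) := by
        rw [← (hAclosed k).closure_eq]
        apply closure_mono (s := ⋃ n, ⋃ (_ : k ≤ n), V n)
        · intro y hy
          simp only [Set.mem_iUnion] at hy ⊢
          obtain ⟨n, hkn, hyn⟩ := hy
          exact ⟨n, hkn, subset_closure hyn⟩
        · rw [mem_closure_iff]
          intro W hWo hx₀W
          have hinf := hx₀ W (hWo.mem_nhds hx₀W)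
          obtain ⟨n, hn, hkn⟩ := hinf.exists_gt k
          obtain ⟨y, hyV, hyW⟩ := hn
          exact ⟨y, hyW, Set.mem_iUnion.mpr ⟨n, Set.mem_iUnion.mpr ⟨le_of_lt hkn, hyV⟩⟩⟩
      simp only [Set.mem_iUnion] at hmem
      obtain ⟨n, hkn, hcl⟩ := hmem
      exact ⟨n, hkn, hcl⟩
    -- contradiction with {x₀} compact
    have hfin := hKfin {x₀} isCompact_singleton
    obtain ⟨m, hm⟩ := hfin.bddAbove
    obtain ⟨n, hmn, hx₀n⟩ := hx₀A (m + 1)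
    have : n ∈ {n : ℕ | (({x₀} : Set X) ∩ U n).Nonempty} :=
      ⟨x₀, rfl, hVcl n hx₀n⟩
    have := hm this
    omega
end

section
/- Every regular closed subset of a weakly compact-bounded space is weakly compact-bounded (with its subspace topology). -/
open Set Topology TopologicalSpace

theorem regularClosed_weaklyCompactBounded {X : Type*} [TopologicalSpace X]
    (h : WeaklyCompactBounded X) (A : Set X) (hA : A = closure (interior A)) :
    WeaklyCompactBounded A := by
  have hAcl : IsClosed A := by rw [hA]; exact isClosed_closure
  intro U hUopen hUne
  -- choose open sets V n in X with U n = val ⁻¹' V n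
  choose V hVopen hVU using fun n => isOpen_induced_iff.mp (hUopen n)
  -- W n = V n ∩ interior A is open and nonempty
  set W : ℕ → Set X := fun n => V n ∩ interior A with hW
  have hWopen : ∀ n, IsOpen (W n) := fun n => (hVopen n).inter isOpen_interior
  have hWne : ∀ n, (W n).Nonempty := by
    intro n
    obtain ⟨a, ha⟩ := hUne n
    have haV : (a : X) ∈ V n := by
      have := ha; rw [← hVU n] at this; exact this
    have haA : (a : X) ∈ closure (interior A) := by rw [← hA]; exact a.2
    have := mem_closure_iff.mp haA (V n) (hVopen n) haV
    obtain ⟨x, hx1, hx2⟩ := this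
    exact ⟨x, hx1, hx2⟩
  obtain ⟨K, hKc, hKinf⟩ := h W hWopen hWne
  refine ⟨Subtype.val ⁻¹' K, ?_, ?_⟩
  · rw [Subtype.isCompact_iff]
    have : Subtype.val '' (Subtype.val ⁻¹' K : Set A) = A ∩ K :=
      Subtype.image_preimage_coe A K
    rw [this]
    exact hKc.inter_left hAcl
  · apply hKinf.mono
    intro n hn
    obtain ⟨x, hxK, hxV, hxI⟩ := hn
    have hxA : x ∈ A := interior_subset hxI
    refine ⟨⟨x, hxA⟩, hxK, ?_⟩
    rw [← hVU n]; exact hxV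
end

section
/- A topological space X is weakly compact-bounded if and only if for every countable family U of non-empty open subsets of X there is a weakly compact-bounded subspace A of X such that A meets infinitely many elements of U. -/
open Set Topology TopologicalSpace

lemma wcb_of_compact {X : Type*} [TopologicalSpace X] (K : Set X) (hK : IsCompact K) :
    WeaklyCompactBounded K := by
  intro V hVo hVn
  refine ⟨Set.univ, ?_, ?_⟩
  · haveI := isCompact_iff_compactSpace.mp hK
    exact isCompact_univ
  · have : {n : ℕ | (Set.univ ∩ V n).Nonempty} = Set.univ := by
      ext n; simp [Set.univ_inter, hVn n]
    rw [this]; exact Set.infinite_univ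

theorem wcb_iff_wcb_subspace {X : Type*} [TopologicalSpace X] :
    WeaklyCompactBounded X ↔
      ∀ U : ℕ → Set X, (∀ n, IsOpen (U n)) → (∀ n, (U n).Nonempty) →
        ∃ A : Set X, WeaklyCompactBounded A ∧ {n : ℕ | (A ∩ U n).Nonempty}.Infinite := by
  constructor
  · intro h U hUo hUn
    obtain ⟨K, hK, hInf⟩ := h U hUo hUn
    exact ⟨K, wcb_of_compact K hK, hInf⟩
  · intro h U hUo hUn
    obtain ⟨A, hA, hInf⟩ := h U hUo hUn
    set f := hInf.natEmbedding with hf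
    set V : ℕ → Set A := fun k => Subtype.val ⁻¹' (U (f k)) with hV
    have hVo : ∀ k, IsOpen (V k) := fun k => (hUo _).preimage continuous_subtype_val
    have hVn : ∀ k, (V k).Nonempty := by
      intro k
      have := (f k).2
      obtain ⟨x, hxA, hxU⟩ := this
      exact ⟨⟨x, hxA⟩, hxU⟩
    obtain ⟨K', hK', hK'Inf⟩ := hA V hVo hVn
    refine ⟨Subtype.val '' K', hK'.image continuous_subtype_val, ?_⟩
    have hsub : (fun k => ((f k : Set.Elem {n | (A ∩ U n).Nonempty}) : ℕ)) ''
        {k : ℕ | (K' ∩ V k).Nonempty} ⊆ {n : ℕ | (Subtype.val '' K' ∩ U n).Nonempty} := by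
      rintro n ⟨k, hk, rfl⟩
      obtain ⟨a, haK, haV⟩ := hk
      exact ⟨a, ⟨a, haK, rfl⟩, haV⟩
    refine Set.Infinite.mono hsub ?_
    refine Set.Infinite.image ?_ hK'Inf
    intro x _ y _ hxy
    exact f.injective (Subtype.ext hxy)
end

section
/- A topological space X is compact-bounded if and only if for every countable family U of non-empty open subsets of X there is a compact-bounded subspace A of X meeting every element of U. -/
open Set Topology TopologicalSpace

theorem cb_iff_cb_subspace {X : Type*} [TopologicalSpace X] :
    CompactBounded X ↔
      ∀ U : ℕ → Set X, (∀ n, IsOpen (U n)) → (∀ n, (U n).Nonempty) →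
        ∃ A : Set X, CompactBounded A ∧ ∀ n, (A ∩ U n).Nonempty := by
  constructor
  · intro h U hO hne
    obtain ⟨K, hK, hmeet⟩ := h U hO hne
    refine ⟨K, ?_, hmeet⟩
    have : CompactSpace ↥K := isCompact_iff_compactSpace.mp hK
    intro V _ hVne
    exact ⟨Set.univ, isCompact_univ, fun n => by simpa using hVne n⟩
  · intro h U hO hne
    obtain ⟨A, hA, hmeet⟩ := h U hO hne
    obtain ⟨K', hK', hmeet'⟩ := hA (fun n => Subtype.val ⁻¹' (U n))
      (fun n => (hO n).preimage continuous_subtype_val)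
      (fun n => by
        obtain ⟨x, hxA, hxU⟩ := hmeet n
        exact ⟨⟨x, hxA⟩, hxU⟩)
    refine ⟨Subtype.val '' K', hK'.image continuous_subtype_val, fun n => ?_⟩
    obtain ⟨x, hxK, hxU⟩ := hmeet' n
    exact ⟨x.val, ⟨x, hxK, rfl⟩, hxU⟩
end

section
/- In a topological group G, every weakly compact-bounded subset of G is first-countable if and only if every weakly compact-bounded subset of G is metrizable. -/
open Set Topology TopologicalSpace

section WcbAux

open Filter Uniformity Pointwise

theorem wcb_of_image {X Y : Type*} [TopologicalSpace X] [TopologicalSpace Y] {f : X → Y}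
    (hf : Continuous f) (hs : Function.Surjective f) (h : WeaklyCompactBounded X) :
    WeaklyCompactBounded Y := by
  intro U hUo hUne
  obtain ⟨K, hKc, hKI⟩ := h (fun n => f ⁻¹' U n) (fun n => (hUo n).preimage hf)
    (fun n => (hUne n).preimage hs)
  refine ⟨f '' K, hKc.image hf, hKI.mono ?_⟩
  rintro n ⟨x, hxK, hxU⟩
  exact ⟨f x, ⟨x, hxK, rfl⟩, hxU⟩

theorem wcb_prod {X Y : Type*} [TopologicalSpace X] [TopologicalSpace Y]
    (hX : WeaklyCompactBounded X) (hY : WeaklyCompactBounded Y) :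
    WeaklyCompactBounded (X × Y) := by
  intro U hUo hUne
  obtain ⟨K1, hK1c, hK1I⟩ := hX (fun n => Prod.fst '' U n)
    (fun n => isOpenMap_fst _ (hUo n)) (fun n => (hUne n).image _)
  set I : Set ℕ := {n | (K1 ∩ Prod.fst '' U n).Nonempty} with hIdef
  let em : ℕ ↪ I := Set.Infinite.natEmbedding I hK1I
  let e : ℕ → ℕ := fun m => (em m : ℕ)
  have he : Function.Injective e := fun a b hab => em.injective (Subtype.ext hab)
  have heI : ∀ m, (K1 ∩ Prod.fst '' U (e m)).Nonempty := fun m => (em m).2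
  let V : ℕ → Set Y := fun m => ⋃ x : K1, (fun y => ((x : X), y)) ⁻¹' U (e m)
  have hVo : ∀ m, IsOpen (V m) :=
    fun m => isOpen_iUnion fun x => (hUo _).preimage (Continuous.prodMk_right _)
  have hVne : ∀ m, (V m).Nonempty := by
    intro m
    obtain ⟨x, hxK, p, hpU, hpx⟩ := heI m
    exact ⟨p.2, Set.mem_iUnion.2 ⟨⟨x, hxK⟩, by simpa [← hpx] using hpU⟩⟩
  obtain ⟨K2, hK2c, hK2I⟩ := hY V hVo hVne
  refine ⟨K1 ×ˢ K2, hK1c.prod hK2c, ?_⟩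
  have hsub : e '' {m | (K2 ∩ V m).Nonempty} ⊆ {n | ((K1 ×ˢ K2) ∩ U n).Nonempty} := by
    rintro _ ⟨m, ⟨y, hyK2, hyV⟩, rfl⟩
    obtain ⟨x, hxy⟩ := Set.mem_iUnion.1 hyV
    exact ⟨((x : X), y), ⟨x.2, hyK2⟩, hxy⟩
  exact (hK2I.image he.injOn).mono hsub

private theorem wcb_metrizable_aux {G : Type*} [Group G] [TopologicalSpace G]
    [IsTopologicalGroup G] [T2Space G]
    (h : ∀ A : Set G, WeaklyCompactBounded A → FirstCountableTopology A)
    (A : Set G) (hA : WeaklyCompactBounded A) :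
    TopologicalSpace.MetrizableSpace A := by
  rcases isEmpty_or_nonempty ↥A with hemp | hne
  · have htop : ∀ t₁ t₂ : TopologicalSpace ↥A, t₁ = t₂ := by
      intro t₁ t₂
      apply TopologicalSpace.ext
      funext s
      rw [Set.eq_empty_of_isEmpty s]
      exact propext (iff_of_true (@isOpen_empty _ t₁) (@isOpen_empty _ t₂))
    have hemb : Topology.IsEmbedding (fun a : ↥A => (PUnit.unit : PUnit.{1})) :=
      ⟨⟨htop _ _⟩, fun a => isEmptyElim a⟩
    exact hemb.metrizableSpace
  · obtain ⟨⟨a₀, ha₀⟩⟩ := hne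
    set B : Set G := (fun p : G × G => p.1⁻¹ * p.2) '' (A ×ˢ A) with hBdef
    have hBmem : ∀ x ∈ A, ∀ y ∈ A, x⁻¹ * y ∈ B := fun x hx y hy => ⟨(x, y), ⟨hx, hy⟩, rfl⟩
    have h1B : (1 : G) ∈ B := by
      have := hBmem a₀ ha₀ a₀ ha₀
      rwa [inv_mul_cancel] at this
    have hBwcb : WeaklyCompactBounded ↥B := by
      refine wcb_of_image (f := fun p : ↥A × ↥A =>
        (⟨(p.1 : G)⁻¹ * p.2, hBmem _ p.1.2 _ p.2.2⟩ : ↥B)) ?_ ?_ (wcb_prod hA hA)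
      · exact Continuous.subtype_mk
          (((continuous_subtype_val.comp continuous_fst).inv).mul
            (continuous_subtype_val.comp continuous_snd)) _
      · rintro ⟨z, ⟨x, y⟩, ⟨hx, hy⟩, rfl⟩
        exact ⟨(⟨x, hx⟩, ⟨y, hy⟩), rfl⟩
    haveI hB1 : FirstCountableTopology ↥B := h B hBwcb
    set ε : ↥B := ⟨1, h1B⟩ with hεdef
    obtain ⟨t, htb⟩ := (𝓝 ε).exists_antitone_basis
    -- W n : open sets in G around 1 whose trace on B is inside t n
    have hWex : ∀ n, ∃ Wn : Set G, IsOpen Wn ∧ (1:G) ∈ Wn ∧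
        ∀ z, ∀ hz : z ∈ B, z ∈ Wn → (⟨z, hz⟩ : ↥B) ∈ t n := by
      intro n
      have htn : t n ∈ 𝓝 ε := htb.1.mem_of_mem trivial
      rw [nhds_subtype] at htn
      obtain ⟨M, hM, hMsub⟩ := htn
      obtain ⟨Wn, hWsub, hWo, hW1⟩ := mem_nhds_iff.1 hM
      exact ⟨Wn, hWo, hW1, fun z hz hzW => hMsub (hWsub hzW)⟩
    choose W hWo hW1 hWt using hWex
    have hzW : ∀ z ∈ B, z ≠ 1 → ∃ n, z ∉ W n := by
      intro z hz hz1
      have hop : IsOpen {w : ↥B | (w : G) ≠ z} :=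
        (isClosed_singleton.isOpen_compl).preimage continuous_subtype_val
      have hmem : {w : ↥B | (w : G) ≠ z} ∈ 𝓝 ε := hop.mem_nhds (Ne.symm hz1)
      obtain ⟨n, -, hn⟩ := htb.1.mem_iff.mp hmem
      exact ⟨n, fun hzWn => hn (hWt n z hz hzWn) rfl⟩
    -- shrinking symmetric neighborhoods
    have key : ∀ U : Set G, IsOpen U → (1:G) ∈ U →
        ∃ V : Set G, IsOpen V ∧ (1:G) ∈ V ∧ V⁻¹ = V ∧ V * V ⊆ U ∧ V ⊆ U := by
      intro U hUo hU1
      obtain ⟨V, hVo, hV1, hVV⟩ := exists_open_nhds_one_mul_subset (hUo.mem_nhds hU1)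
      have h1' : (1:G) ∈ V ∩ V⁻¹ := ⟨hV1, by simpa using hV1⟩
      have hmul : (V ∩ V⁻¹) * (V ∩ V⁻¹) ⊆ U :=
        (Set.mul_subset_mul inter_subset_left inter_subset_left).trans hVV
      refine ⟨V ∩ V⁻¹, hVo.inter hVo.inv, h1', ?_, hmul, ?_⟩
      · rw [Set.inter_inv, inv_inv, Set.inter_comm]
      · intro v hv
        have := hmul (Set.mul_mem_mul hv h1')
        rwa [mul_one] at this
    choose! F hFo hF1 hFsymm hFmul hFsub using key
    set S : ℕ → Set G := fun n => Nat.rec (F (W 0)) (fun k prev => F (prev ∩ W (k+1))) n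
      with hSdef
    have hSall : ∀ n, IsOpen (S n) ∧ (1:G) ∈ S n ∧ S n ⊆ W n ∧ (S n)⁻¹ = S n := by
      intro n
      induction n with
      | zero =>
        exact ⟨hFo _ (hWo 0) (hW1 0), hF1 _ (hWo 0) (hW1 0), hFsub _ (hWo 0) (hW1 0),
          hFsymm _ (hWo 0) (hW1 0)⟩
      | succ k ih =>
        have ho : IsOpen (S k ∩ W (k+1)) := ih.1.inter (hWo _)
        have h1 : (1:G) ∈ S k ∩ W (k+1) := ⟨ih.2.1, hW1 _⟩
        exact ⟨hFo _ ho h1, hF1 _ ho h1, (hFsub _ ho h1).trans inter_subset_right,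
          hFsymm _ ho h1⟩
    have hSo : ∀ n, IsOpen (S n) := fun n => (hSall n).1
    have hS1 : ∀ n, (1:G) ∈ S n := fun n => (hSall n).2.1
    have hSW : ∀ n, S n ⊆ W n := fun n => (hSall n).2.2.1
    have hSsymm : ∀ n, (S n)⁻¹ = S n := fun n => (hSall n).2.2.2
    have hSmul : ∀ n, S (n+1) * S (n+1) ⊆ S n := by
      intro n
      have ho : IsOpen (S n ∩ W (n+1)) := (hSo n).inter (hWo _)
      have h1 : (1:G) ∈ S n ∩ W (n+1) := ⟨hS1 n, hW1 _⟩
      exact (hFmul _ ho h1).trans inter_subset_left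
    have hSanti : Antitone S := by
      apply antitone_nat_of_succ_le
      intro n
      have ho : IsOpen (S n ∩ W (n+1)) := (hSo n).inter (hWo _)
      have h1 : (1:G) ∈ S n ∩ W (n+1) := ⟨hS1 n, hW1 _⟩
      exact (hFsub _ ho h1).trans inter_subset_left
    -- the uniformity
    set E : ℕ → Set (G × G) := fun n => {p | p.1⁻¹ * p.2 ∈ S n} with hEdef
    have hEanti : Antitone E := fun m n hmn p hp => hSanti hmn hp
    have hEdir : Directed (· ≥ ·) E := fun m n =>
      ⟨max m n, hEanti (le_max_left m n), hEanti (le_max_right m n)⟩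
    set 𝓕 : Filter (G × G) := ⨅ n, 𝓟 (E n) with h𝓕def
    have hFbasis : 𝓕.HasBasis (fun _ : ℕ => True) E := hasBasis_iInf_principal hEdir
    have hErefl : ∀ n, SetRel.id ⊆ E n := by
      rintro n ⟨x, y⟩ h
      have : x = y := h
      subst this
      show x⁻¹ * x ∈ S n
      rw [inv_mul_cancel]; exact hS1 n
    have hEsymmsub : ∀ n, ∀ p ∈ E n, Prod.swap p ∈ E n := by
      rintro n ⟨x, y⟩ hp
      show y⁻¹ * x ∈ S n
      have : y⁻¹ * x = (x⁻¹ * y)⁻¹ := by group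
      rw [this, ← hSsymm n]
      exact Set.inv_mem_inv.mpr hp
    have hEcomp : ∀ n, SetRel.comp (E (n+1)) (E (n+1)) ⊆ E n := by
      rintro n ⟨x, z⟩ ⟨y, hxy, hyz⟩
      show x⁻¹ * z ∈ S n
      have : x⁻¹ * z = (x⁻¹ * y) * (y⁻¹ * z) := by group
      rw [this]
      exact hSmul n (Set.mul_mem_mul hxy hyz)
    set core : UniformSpace.Core G :=
      { uniformity := 𝓕
        refl := le_iInf fun n => principal_mono.mpr (hErefl n)
        symm := by
          rw [hFbasis.tendsto_iff hFbasis]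
          exact fun n _ => ⟨n, trivial, fun p hp => hEsymmsub n p hp⟩
        comp := by
          refine le_iInf fun n => ?_
          rw [le_principal_iff]
          exact mem_of_superset (Filter.mem_lift' (hFbasis.mem_of_mem trivial (i := n+1)))
            (hEcomp n) } with hcoredef
    have hcg : 𝓕.IsCountablyGenerated := hFbasis.isCountablyGenerated
    have hball : ∀ x : G, (@nhds G core.toTopologicalSpace x).HasBasis (fun _ : ℕ => True)
        (fun n => {y | x⁻¹ * y ∈ S n}) := by
      intro x
      rw [core.nhds_toTopologicalSpace x]
      exact hFbasis.comap (Prod.mk x)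
    -- original topology is finer
    have hτle : ∀ x : G, 𝓝 x ≤ @nhds G core.toTopologicalSpace x := by
      intro x
      rw [(hball x).ge_iff]
      intro n _
      have ho : IsOpen {y | x⁻¹ * y ∈ S n} :=
        (hSo n).preimage (continuous_const.mul continuous_id)
      exact ho.mem_nhds (by simp [hS1 n])
    -- separation on A
    have hsepS : ∀ x ∈ A, ∀ y ∈ A, (∀ n, x⁻¹ * y ∈ S n) → x = y := by
      intro x hx y hy hall
      by_contra hne'
      have hz1 : x⁻¹ * y ≠ 1 := by
        simpa [inv_mul_eq_one] using hne'
      obtain ⟨n, hn⟩ := hzW _ (hBmem x hx y hy) hz1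
      exact hn (hSW n (hall n))
    have hsepN : ∀ x ∈ A, ∀ y ∈ A, (@nhds G core.toTopologicalSpace x ⊓ @nhds G core.toTopologicalSpace y).NeBot → x = y := by
      intro x hx y hy hne'
      refine hsepS x hx y hy fun n => ?_
      have h1 : {w | x⁻¹ * w ∈ S (n+1)} ∈ @nhds G core.toTopologicalSpace x :=
        (hball x).mem_of_mem (i := n+1) trivial
      have h2 : {w | y⁻¹ * w ∈ S (n+1)} ∈ @nhds G core.toTopologicalSpace y :=
        (hball y).mem_of_mem (i := n+1) trivial
      obtain ⟨w, hw1, hw2⟩ := hne'.nonempty_of_mem (inter_mem_inf h1 h2)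
      have heq : x⁻¹ * y = (x⁻¹ * w) * (y⁻¹ * w)⁻¹ := by group
      rw [heq]
      refine hSmul n (Set.mul_mem_mul hw1 ?_)
      rw [← hSsymm (n+1)]
      exact Set.inv_mem_inv.mpr hw2
    -- THE MAIN STEP
    have hmain : ∀ a, a ∈ A → ∀ V ∈ 𝓝 a, ∃ n, ∀ x ∈ A, a⁻¹ * x ∈ S n → x ∈ V := by
      intro a ha V hV
      obtain ⟨V₂, hV₂mem, hV₂closed, hV₂sub⟩ := exists_mem_nhds_isClosed_subset hV
      by_contra hcon
      push_neg at hcon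
      have hcon' : ∀ n, ∃ x ∈ A, a⁻¹ * x ∈ S n ∧ x ∉ V₂ := by
        intro n
        obtain ⟨x, hxA, hxS, hxV⟩ := hcon n
        exact ⟨x, hxA, hxS, fun hx2 => hxV (hV₂sub hx2)⟩
      set Un : ℕ → Set ↥A := fun n => Subtype.val ⁻¹' ({y | a⁻¹ * y ∈ S n} ∩ V₂ᶜ) with hUndef
      have hUno : ∀ n, IsOpen (Un n) := by
        intro n
        exact ((((hSo n).preimage (continuous_const.mul continuous_id))).inter
          hV₂closed.isOpen_compl).preimage continuous_subtype_val
      have hUnne : ∀ n, (Un n).Nonempty := by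
        intro n
        obtain ⟨x, hxA, hxS, hxV⟩ := hcon' n
        exact ⟨⟨x, hxA⟩, hxS, hxV⟩
      obtain ⟨K, hKc, hKI⟩ := hA Un hUno hUnne
      set K' : Set G := Subtype.val '' K with hK'def
      have hK'A : K' ⊆ A := by rintro _ ⟨k, hk, rfl⟩; exact k.2
      have hK'c : IsCompact K' := hKc.image continuous_subtype_val
      set D : Set G := K' ∩ V₂ᶜ with hDdef
      have haD : a ∈ @closure G core.toTopologicalSpace D := by
        rw [@mem_closure_iff_nhds_basis G core.toTopologicalSpace ℕ a D _ _ (hball a)]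
        intro n _
        obtain ⟨m, hmI, hmn⟩ := hKI.exists_gt n
        obtain ⟨k, hkK, hkUn⟩ := hmI
        exact ⟨(k : G), ⟨⟨k, hkK, rfl⟩, hkUn.2⟩, hSanti hmn.le hkUn.1⟩
      have hDK : D ⊆ K' := inter_subset_left
      set Fl : Filter G := @nhds G core.toTopologicalSpace a ⊓ 𝓟 D with hFldef
      have hFlne : Fl.NeBot := by
        rw [((hball a).inf_principal D).neBot_iff]
        intro n _
        obtain ⟨m, hmI, hmn⟩ := hKI.exists_gt n
        obtain ⟨k, hkK, hkUn⟩ := hmI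
        exact ⟨(k : G), hSanti hmn.le hkUn.1, ⟨⟨k, hkK, rfl⟩, hkUn.2⟩⟩
      haveI := hFlne
      have hFlK : Fl ≤ 𝓟 K' := le_trans inf_le_right (principal_mono.mpr hDK)
      obtain ⟨c, hcK', hc⟩ := hK'c hFlK
      have hc' : (@nhds G core.toTopologicalSpace c ⊓ Fl).NeBot :=
        Filter.NeBot.mono hc.neBot (inf_le_inf_right Fl (hτle c))
      have hca : c = a := hsepN c (hK'A hcK') a ha
        (hc'.mono (le_inf inf_le_left (le_trans inf_le_right inf_le_left)))
      have haDτ : a ∈ closure D :=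
        mem_closure_iff_clusterPt.mpr ((hca ▸ hc).mono inf_le_right)
      rw [mem_closure_iff_nhds] at haDτ
      obtain ⟨y, hy1, hy2⟩ := haDτ V₂ hV₂mem
      exact hy2.2 hy1
    -- the two topologies on A agree
    have hkey : (instTopologicalSpaceSubtype : TopologicalSpace ↥A) =
        TopologicalSpace.induced (Subtype.val : ↥A → G) core.toTopologicalSpace := by
      apply le_antisymm
      · rw [le_iff_nhds]
        intro x
        rw [@nhds_induced G ↥A core.toTopologicalSpace Subtype.val x, nhds_subtype]
        exact comap_mono (hτle _)
      · rw [le_iff_nhds]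
        intro x
        rw [@nhds_induced G ↥A core.toTopologicalSpace Subtype.val x, nhds_subtype]
        intro s hs
        rw [mem_comap] at hs ⊢
        obtain ⟨V, hV, hVs⟩ := hs
        obtain ⟨n, hn⟩ := hmain (↑x) x.2 V hV
        refine ⟨{y | (↑x : G)⁻¹ * y ∈ S n}, (hball ↑x).mem_of_mem (i := n) trivial, ?_⟩
        intro z hz
        exact hVs (hn (↑z) z.2 hz)
    rw [hkey]
    haveI hcgA : (Filter.comap (fun p : ↥A × ↥A => ((↑p.1 : G), (↑p.2 : G))) 𝓕).IsCountablyGenerated :=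
      @Filter.comap.isCountablyGenerated _ _ 𝓕 hcg _
    have hT0 : @T0Space ↥A (TopologicalSpace.induced (Subtype.val : ↥A → G)
        core.toTopologicalSpace) := by
      refine (@t0Space_iff_inseparable ↥A
        (TopologicalSpace.induced (Subtype.val : ↥A → G) core.toTopologicalSpace)).mpr ?_
      intro x y hxy
      apply Subtype.ext
      apply hsepN (↑x) x.2 (↑y) y.2
      have h1 : (pure (↑x : G)) ≤ @nhds G core.toTopologicalSpace ↑x :=
        @pure_le_nhds G core.toTopologicalSpace ↑x
      have h2 : (pure (↑x : G)) ≤ @nhds G core.toTopologicalSpace ↑y := by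
        have hp : pure x ≤ @nhds ↥A (TopologicalSpace.induced (Subtype.val : ↥A → G)
            core.toTopologicalSpace) y := hxy ▸ @pure_le_nhds ↥A
          (TopologicalSpace.induced (Subtype.val : ↥A → G) core.toTopologicalSpace) x
        rw [@nhds_induced G ↥A core.toTopologicalSpace Subtype.val y] at hp
        calc pure (↑x : G) = Filter.map Subtype.val (pure x) := by rw [Filter.map_pure]
        _ ≤ Filter.map Subtype.val (Filter.comap Subtype.val
              (@nhds G core.toTopologicalSpace ↑y)) := Filter.map_mono hp
        _ ≤ @nhds G core.toTopologicalSpace ↑y := Filter.map_comap_le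
      exact Filter.neBot_of_le (le_inf h1 h2)
    exact @UniformSpace.metrizableSpace ↥A
      (UniformSpace.comap Subtype.val (UniformSpace.ofCore core)) hcgA hT0


end WcbAux

theorem wcb_firstCountable_iff_metrizable {G : Type*} [Group G] [TopologicalSpace G]
    [IsTopologicalGroup G] [T2Space G] :
    (∀ A : Set G, WeaklyCompactBounded A → FirstCountableTopology A) ↔
    (∀ A : Set G, WeaklyCompactBounded A → TopologicalSpace.MetrizableSpace A) := by
  constructor
  · intro h A hA
    exact wcb_metrizable_aux h A hA
  · intro h A hA
    haveI := h A hA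
    infer_instance
end

section
/- Let G be a paratopological group with topology τ and conjugate topology τ^{-1} = {U^{-1} : U ∈ τ}. If the diagonal Δ_G of (G,τ^{-1}) × (G,τ), with the subspace topology, is weakly compact-bounded, then G is a topological group and is weakly compact-bounded. -/
open Set Topology TopologicalSpace
open Pointwise

theorem wcb_of_continuous_surj {X Y : Type*} [TopologicalSpace X] [TopologicalSpace Y]
    (h : WeaklyCompactBounded X) (f : X → Y) (hf : Continuous f)
    (hsurj : Function.Surjective f) : WeaklyCompactBounded Y := by
  intro U hop hne
  obtain ⟨K, hK, hS⟩ := h (fun n => f ⁻¹' U n) (fun n => (hop n).preimage hf)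
    (fun n => (hne n).preimage hsurj)
  refine ⟨f '' K, hK.image hf, hS.mono ?_⟩
  rintro n ⟨x, hxK, hxU⟩
  exact ⟨f x, ⟨x, hxK, rfl⟩, hxU⟩

theorem wcb_cluster {X : Type*} [TopologicalSpace X] (h : WeaklyCompactBounded X)
    (U : ℕ → Set X) (hop : ∀ n, IsOpen (U n)) (hne : ∀ n, (U n).Nonempty) :
    ∃ c : X, ∀ N : Set X, IsOpen N → c ∈ N → {n : ℕ | (N ∩ U n).Nonempty}.Infinite := by
  obtain ⟨K, hK, hS⟩ := h U hop hne
  by_contra hc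
  push_neg at hc
  have hc' : ∀ x : X, ∃ N : Set X, IsOpen N ∧ x ∈ N ∧ {n : ℕ | (N ∩ U n).Nonempty}.Finite := by
    intro x
    obtain ⟨N, hNo, hNm, hNf⟩ := hc x
    exact ⟨N, hNo, hNm, hNf⟩
  choose N hNo hNm hNf using hc'
  obtain ⟨t, _, hcov⟩ := hK.elim_nhds_subcover N (fun x _ => (hNo x).mem_nhds (hNm x))
  have hsub : {n : ℕ | (K ∩ U n).Nonempty} ⊆ ⋃ x ∈ t, {n : ℕ | (N x ∩ U n).Nonempty} := by
    rintro n ⟨z, hzK, hzU⟩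
    obtain ⟨x, hxt, hzN⟩ := Set.mem_iUnion₂.mp (hcov hzK)
    exact Set.mem_iUnion₂.mpr ⟨x, hxt, ⟨z, hzN, hzU⟩⟩
  exact hS ((t.finite_toSet.biUnion (fun x _ => hNf x)).subset hsub)

private theorem two_large {S : Set ℕ} (hS : S.Infinite) (k : ℕ) :
    ∃ n n', n ∈ S ∧ n' ∈ S ∧ k ≤ n ∧ n < n' := by
  obtain ⟨n, hn⟩ := (hS.diff (Set.finite_Iio k)).nonempty
  obtain ⟨n', hn'⟩ := (hS.diff (Set.finite_Iio (n + 1))).nonempty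
  refine ⟨n, n', hn.1, hn'.1, ?_, ?_⟩
  · have := hn.2; simp [Set.mem_Iio] at this; omega
  · have := hn'.2; simp [Set.mem_Iio] at this; omega

/-- The core combinatorial argument. -/
theorem aux_core {G : Type*} [Group G] [TopologicalSpace G] [ContinuousMul G]
    (Sopen : Set G → Prop)
    (hlow : ∀ {s : Set G}, IsOpen s → Sopen s)
    (hlowW : ∀ {s : Set G}, IsOpen s → Sopen (s ∩ (fun y : G => y⁻¹) ⁻¹' s))
    (htransl : ∀ (g : G) {s : Set G}, Sopen s → Sopen ((fun y : G => g * y) ⁻¹' s))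
    (hcl : ∀ O : ℕ → Set G, (∀ n, Sopen (O n)) → (∀ n, (O n).Nonempty) →
      ∃ c : G, ∀ N : Set G, Sopen N → c ∈ N → {n : ℕ | (N ∩ O n).Nonempty}.Infinite)
    (U : Set G) (hU : IsOpen U) (hU1 : (1:G) ∈ U) :
    ∃ V : Set G, IsOpen V ∧ (1:G) ∈ V ∧ ∀ x ∈ V, x⁻¹ ∈ U := by
  have key_shrink : ∀ O : Set G, IsOpen O → (1:G) ∈ O →
      ∃ V : Set G, IsOpen V ∧ (1:G) ∈ V ∧ ∀ a b : G, a ∈ V → b ∈ V → a * b ∈ O := by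
    intro O hO h1
    obtain ⟨V, hVo, hV1, hVm⟩ := exists_open_nhds_one_mul_subset (hO.mem_nhds h1)
    exact ⟨V, hVo, hV1, fun a b ha hb => hVm (Set.mul_mem_mul ha hb)⟩
  by_contra hbad
  push_neg at hbad
  choose f hf1 hf2 hf3 using
    fun O : {O : Set G // IsOpen O ∧ (1:G) ∈ O} => key_shrink O.1 O.2.1 O.2.2
  let seq : ℕ → {O : Set G // IsOpen O ∧ (1:G) ∈ O} :=
    fun n => Nat.rec ⟨U, hU, hU1⟩ (fun _ p => ⟨f p, hf1 p, hf2 p⟩) n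
  set V : ℕ → Set G := fun n => (seq n).1 with hVdef
  have hVopen : ∀ n, IsOpen (V n) := fun n => (seq n).2.1
  have hV1 : ∀ n, (1:G) ∈ V n := fun n => (seq n).2.2
  have hVmul : ∀ n, ∀ a b : G, a ∈ V (n+1) → b ∈ V (n+1) → a * b ∈ V n :=
    fun n => hf3 (seq n)
  have hstep : ∀ n, V (n+1) ⊆ V n := by
    intro n y hy
    have := hVmul n y 1 hy (hV1 (n+1))
    rwa [mul_one] at this
  have hVmono : ∀ m n : ℕ, m ≤ n → V n ⊆ V m := by
    intro m n hmn
    induction n with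
    | zero => have : m = 0 := Nat.le_zero.mp hmn; subst this; exact fun _ hh => hh
    | succ k ih =>
      rcases Nat.lt_or_ge m (k+1) with hlt | hge
      · exact fun y hy => ih (Nat.lt_succ_iff.mp hlt) (hstep k hy)
      · have : m = k + 1 := le_antisymm hmn hge
        subst this; exact fun _ hy => hy
  have hV0 : V 0 = U := rfl
  choose x hx hxU using fun n => hbad (V n) (hVopen n) (hV1 n)
  set W : ℕ → Set G := fun n => V n ∩ (fun y : G => y⁻¹) ⁻¹' (V n) with hWdef
  have hWopen : ∀ n, Sopen (W n) := fun n => hlowW (hVopen n)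
  have hW1 : ∀ n, (1:G) ∈ W n := fun n => ⟨hV1 n, by simp [Set.mem_preimage, hV1 n]⟩
  have hWsub : ∀ n, ∀ y ∈ W n, y ∈ V n := fun n y hy => hy.1
  have hWinv : ∀ n, ∀ y ∈ W n, y⁻¹ ∈ V n := fun n y hy => hy.2
  obtain ⟨c, hc⟩ := hcl (fun n => (fun y : G => x n * y) ⁻¹' W (n+2))
    (fun n => htransl _ (hWopen (n+2)))
    (fun n => ⟨(x n)⁻¹, by
      simp only [Set.mem_preimage, mul_inv_cancel]; exact hW1 (n+2)⟩)
  have hcV1 : c ∉ V 1 := by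
    intro hcV
    obtain ⟨n, y, hyV1, hyO⟩ := (hc (V 1) (hlow (hVopen 1)) hcV).nonempty
    have h1 : (x n * y)⁻¹ ∈ V (n+2) := hWinv (n+2) _ hyO
    have h2 : (x n)⁻¹ ∈ V 0 := by
      have := hVmul 0 y ((x n * y)⁻¹) hyV1 (hVmono 1 (n+2) (by omega) h1)
      rwa [show y * (x n * y)⁻¹ = (x n)⁻¹ by group] at this
    exact hxU n h2
  have hpV : ∀ m, c⁻¹ ∈ V m := by
    intro m
    have hNopen : Sopen ((fun y : G => c⁻¹ * y) ⁻¹' W (m+2)) := htransl _ (hWopen (m+2))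
    have hcN : c ∈ (fun y : G => c⁻¹ * y) ⁻¹' W (m+2) := by
      simp only [Set.mem_preimage, inv_mul_cancel]; exact hW1 (m+2)
    obtain ⟨n, n', hnS, _, hkn, _⟩ := two_large (hc _ hNopen hcN) (m+2)
    obtain ⟨y, hy1, hy2⟩ := hnS
    have ha : c⁻¹ * y ∈ V (m+2) := hWsub (m+2) _ hy1
    have hb : (x n * y)⁻¹ ∈ V (m+2) := hVmono (m+2) (n+2) (by omega) (hWinv (n+2) _ hy2)
    have hab : (c⁻¹ * y) * (x n * y)⁻¹ ∈ V (m+1) := hVmul (m+1) _ _ ha hb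
    have hxn : x n ∈ V (m+1) := hVmono (m+1) n (by omega) (hx n)
    have := hVmul m _ _ hab hxn
    rwa [show (c⁻¹ * y) * (x n * y)⁻¹ * x n = c⁻¹ by group] at this
  have hppow : ∀ k m : ℕ, (c⁻¹) ^ k ∈ V m := by
    intro k
    induction k with
    | zero => intro m; simpa using hV1 m
    | succ k ih =>
      intro m
      have := hVmul m _ _ (ih (m+1)) (hpV (m+1))
      rwa [← pow_succ] at this
  obtain ⟨d, hd⟩ := hcl (fun n => (fun y : G => ((c⁻¹) ^ (n+1))⁻¹ * y) ⁻¹' W n)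
    (fun n => htransl _ (hWopen n))
    (fun n => ⟨(c⁻¹) ^ (n+1), by
      simp only [Set.mem_preimage, inv_mul_cancel]; exact hW1 n⟩)
  have hfinal : c ∈ V 1 := by
    have hNopen : Sopen ((fun y : G => d⁻¹ * y) ⁻¹' W 5) := htransl _ (hWopen 5)
    have hdN : d ∈ (fun y : G => d⁻¹ * y) ⁻¹' W 5 := by
      simp only [Set.mem_preimage, inv_mul_cancel]; exact hW1 5
    obtain ⟨n, n', hnS, hn'S, hkn, hlt⟩ := two_large (hd _ hNopen hdN) 5
    obtain ⟨y, hy1, hy2⟩ := hnS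
    obtain ⟨y', hy1', hy2'⟩ := hn'S
    obtain ⟨j, rfl⟩ : ∃ j : ℕ, n' = n + j + 1 := ⟨n' - n - 1, by omega⟩
    set p : G := c⁻¹ with hpdef
    have hkey : (p ^ (j+1))⁻¹
        = ((p ^ (n + j + 1 + 1))⁻¹ * y') *
          ((d⁻¹ * y')⁻¹ * ((d⁻¹ * y) * ((p ^ (n+1))⁻¹ * y)⁻¹)) := by
      rw [show n + j + 1 + 1 = (n+1) + (j+1) by omega, pow_add]
      group
    have ha1 : (p ^ (n + j + 1 + 1))⁻¹ * y' ∈ V 5 :=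
      hVmono 5 (n + j + 1) (by omega) (hWsub (n + j + 1) _ hy2')
    have ha2 : (d⁻¹ * y')⁻¹ ∈ V 5 := hWinv 5 _ hy1'
    have ha3 : d⁻¹ * y ∈ V 5 := hWsub 5 _ hy1
    have ha4 : ((p ^ (n+1))⁻¹ * y)⁻¹ ∈ V 5 := hVmono 5 n hkn (hWinv n _ hy2)
    have h34 : (d⁻¹ * y) * ((p ^ (n+1))⁻¹ * y)⁻¹ ∈ V 4 := hVmul 4 _ _ ha3 ha4
    have h234 : (d⁻¹ * y')⁻¹ * ((d⁻¹ * y) * ((p ^ (n+1))⁻¹ * y)⁻¹) ∈ V 3 :=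
      hVmul 3 _ _ (hVmono 4 5 (by omega) ha2) h34
    have hprod : (p ^ (j+1))⁻¹ ∈ V 2 := by
      rw [hkey]
      exact hVmul 2 _ _ (hVmono 3 5 (by omega) ha1) h234
    have hfin : p⁻¹ ∈ V 1 := by
      have := hVmul 1 _ _ hprod (hppow j 2)
      rwa [show (p ^ (j+1))⁻¹ * p ^ j = p⁻¹ by
        rw [pow_succ, mul_inv_rev, mul_assoc, inv_mul_cancel, mul_one]] at this
    rwa [hpdef, inv_inv] at hfin
  exact hcV1 hfinal

theorem aux_continuous_inv {G : Type*} [Group G] [TopologicalSpace G] [ContinuousMul G]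
    (hinv : ∀ U : Set G, IsOpen U → (1:G) ∈ U →
      ∃ V : Set G, IsOpen V ∧ (1:G) ∈ V ∧ ∀ x ∈ V, x⁻¹ ∈ U) :
    Continuous (fun x : G => x⁻¹) := by
  rw [continuous_def]
  intro O hO
  rw [isOpen_iff_forall_mem_open]
  intro g hg
  have hU1 : IsOpen ((fun y : G => y * g⁻¹) ⁻¹' O) :=
    (continuous_mul_right g⁻¹).isOpen_preimage O hO
  have hU1mem : (1:G) ∈ (fun y : G => y * g⁻¹) ⁻¹' O := by
    simpa [Set.mem_preimage] using hg
  obtain ⟨V, hVo, hV1, hVinv⟩ := hinv _ hU1 hU1mem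
  refine ⟨(fun y : G => g⁻¹ * y) ⁻¹' V, ?_, (continuous_mul_left g⁻¹).isOpen_preimage V hVo, ?_⟩
  · intro z hz
    have := hVinv _ hz
    simpa [Set.mem_preimage, mul_inv_rev, mul_assoc] using this
  · simp [Set.mem_preimage, hV1]

/-- The conjugate topology. -/
private def invT {G : Type*} [Inv G] (τ : TopologicalSpace G) : TopologicalSpace G :=
  TopologicalSpace.induced (fun x : G => x⁻¹) τ

/-- The topology of the diagonal group. -/
private def sigT {G : Type*} [Inv G] (τ : TopologicalSpace G) : TopologicalSpace G :=
  invT τ ⊓ τ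

private theorem sigT_le {G : Type*} [Inv G] (τ : TopologicalSpace G) : sigT τ ≤ τ :=
  inf_le_right

private theorem sigT_le' {G : Type*} [Inv G] (τ : TopologicalSpace G) : sigT τ ≤ invT τ :=
  inf_le_left

private theorem sigma_lower {G : Type*} [Inv G] (τ : TopologicalSpace G) {s : Set G}
    (hs : IsOpen[τ] s) : IsOpen[sigT τ] s :=
  hs.mono (sigT_le τ)

private theorem sigma_lowerW {G : Type*} [Inv G] (τ : TopologicalSpace G) {s : Set G}
    (hs : IsOpen[τ] s) : IsOpen[sigT τ] (s ∩ (fun y : G => y⁻¹) ⁻¹' s) := by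
  have h1 : IsOpen[invT τ] ((fun y : G => y⁻¹) ⁻¹' s) :=
    @Continuous.isOpen_preimage G G (invT τ) τ _
      (@continuous_induced_dom G G (fun y : G => y⁻¹) τ) s hs
  exact @IsOpen.inter G (sigT τ) s _ (sigma_lower τ hs) (h1.mono (sigT_le' τ))

private theorem sigma_transl {G : Type*} [Group G] [t : TopologicalSpace G] [ContinuousMul G]
    (g : G) {s : Set G} (hs : IsOpen[sigT t] s) :
    IsOpen[sigT t] ((fun y : G => g * y) ⁻¹' s) := by
  have hidστ : @Continuous G G (sigT t) t id :=
    continuous_id_iff_le.mpr (sigT_le t)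
  have hidστ' : @Continuous G G (sigT t) (invT t) id :=
    continuous_id_iff_le.mpr (sigT_le' t)
  have hinvστ : @Continuous G G (sigT t) t (fun y : G => y⁻¹) :=
    @Continuous.comp G G G (sigT t) (invT t) t _ _
      (@continuous_induced_dom G G (fun y : G => y⁻¹) t) hidστ'
  have h1 : @Continuous G G (sigT t) t (fun y : G => (g * y)⁻¹) := by
    have h2 : @Continuous G G (sigT t) t (fun y : G => y⁻¹ * g⁻¹) :=
      @Continuous.comp G G G (sigT t) t t _ _ (continuous_mul_right g⁻¹) hinvστ
    convert h2 using 1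
    funext y; rw [mul_inv_rev]
  have hτ'c : @Continuous G G (sigT t) (invT t) (fun y : G => g * y) := by
    rw [show invT t = TopologicalSpace.induced (fun x : G => x⁻¹) t from rfl]
    exact continuous_induced_rng.mpr h1
  have hτc : @Continuous G G (sigT t) t (fun y : G => g * y) :=
    @Continuous.comp G G G (sigT t) t t _ _ (continuous_mul_left g) hidστ
  have : @Continuous G G (sigT t) (sigT t) (fun y : G => g * y) := by
    rw [show sigT t = invT t ⊓ t from rfl]
    exact continuous_inf_rng.mpr ⟨hτ'c, hτc⟩
  exact @Continuous.isOpen_preimage G G (sigT t) (sigT t) _ this s hs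

private theorem sigma_wcb {G : Type*} [Group G] (τ : TopologicalSpace G)
    (h : @WeaklyCompactBounded {p : G × G // p.1 = p.2}
      (@instTopologicalSpaceSubtype (G × G) (fun p => p.1 = p.2)
        (@instTopologicalSpaceProd G G
          (TopologicalSpace.induced (fun x : G => x⁻¹) τ) τ))) :
    @WeaklyCompactBounded G (sigT τ) := by
  have hval : @Continuous _ _
      (@instTopologicalSpaceSubtype (G × G) (fun p => p.1 = p.2)
        (@instTopologicalSpaceProd G G (invT τ) τ))
      (@instTopologicalSpaceProd G G (invT τ) τ)
      (Subtype.val : {p : G × G // p.1 = p.2} → G × G) :=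
    @continuous_subtype_val (G × G) (@instTopologicalSpaceProd G G (invT τ) τ) (fun p => p.1 = p.2)
  have hπτ : @Continuous _ _
      (@instTopologicalSpaceSubtype (G × G) (fun p => p.1 = p.2)
        (@instTopologicalSpaceProd G G (invT τ) τ)) τ
      (fun q : {p : G × G // p.1 = p.2} => q.val.2) :=
    @Continuous.comp _ (G × G) G
      (@instTopologicalSpaceSubtype (G × G) (fun p => p.1 = p.2)
        (@instTopologicalSpaceProd G G (invT τ) τ))
      (@instTopologicalSpaceProd G G (invT τ) τ) τ _ _
      (@continuous_snd G G (invT τ) τ) hval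
  have hπτ' : @Continuous _ _
      (@instTopologicalSpaceSubtype (G × G) (fun p => p.1 = p.2)
        (@instTopologicalSpaceProd G G (invT τ) τ)) (invT τ)
      (fun q : {p : G × G // p.1 = p.2} => q.val.2) := by
    have heq : (fun q : {p : G × G // p.1 = p.2} => q.val.2)
        = (fun q : {p : G × G // p.1 = p.2} => q.val.1) := by
      funext q; exact q.2.symm
    rw [heq]
    exact @Continuous.comp _ (G × G) G
      (@instTopologicalSpaceSubtype (G × G) (fun p => p.1 = p.2)
        (@instTopologicalSpaceProd G G (invT τ) τ))
      (@instTopologicalSpaceProd G G (invT τ) τ) (invT τ) _ _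
      (@continuous_fst G G (invT τ) τ) hval
  have hπ : @Continuous _ _
      (@instTopologicalSpaceSubtype (G × G) (fun p => p.1 = p.2)
        (@instTopologicalSpaceProd G G (invT τ) τ)) (sigT τ)
      (fun q : {p : G × G // p.1 = p.2} => q.val.2) := by
    rw [show sigT τ = invT τ ⊓ τ from rfl]
    exact continuous_inf_rng.mpr ⟨hπτ', hπτ⟩
  have hπsurj : Function.Surjective (fun q : {p : G × G // p.1 = p.2} => q.val.2) :=
    fun a => ⟨⟨(a, a), rfl⟩, rfl⟩
  exact @wcb_of_continuous_surj _ _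
    (@instTopologicalSpaceSubtype (G × G) (fun p => p.1 = p.2)
      (@instTopologicalSpaceProd G G (invT τ) τ)) (sigT τ) h _ hπ hπsurj

theorem diagonal_wcb_implies_topGroup {G : Type*} [Group G] (τ : TopologicalSpace G)
    (hmul : @ContinuousMul G τ _)
    (h : @WeaklyCompactBounded {p : G × G // p.1 = p.2}
      (@instTopologicalSpaceSubtype (G × G) (fun p => p.1 = p.2)
        (@instTopologicalSpaceProd G G
          (TopologicalSpace.induced (fun x : G => x⁻¹) τ) τ))) :
    @ContinuousInv G τ _ ∧ @WeaklyCompactBounded G τ := by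
  have hWσ : @WeaklyCompactBounded G (sigT τ) := sigma_wcb τ h
  have hWτ : @WeaklyCompactBounded G τ :=
    @wcb_of_continuous_surj G G (sigT τ) τ hWσ id
      ((@continuous_id_iff_le G (sigT τ) τ).mpr (sigT_le τ)) Function.surjective_id
  have hcl : ∀ O : ℕ → Set G, (∀ n, IsOpen[sigT τ] (O n)) → (∀ n, (O n).Nonempty) →
      ∃ c : G, ∀ N : Set G, IsOpen[sigT τ] N → c ∈ N →
        {n : ℕ | (N ∩ O n).Nonempty}.Infinite :=
    fun O h1 h2 => @wcb_cluster G (sigT τ) hWσ O h1 h2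
  have hinv : ∀ U : Set G, IsOpen[τ] U → (1:G) ∈ U →
      ∃ V : Set G, IsOpen[τ] V ∧ (1:G) ∈ V ∧ ∀ x ∈ V, x⁻¹ ∈ U := by
    letI := τ
    haveI := hmul
    exact @aux_core G _ τ hmul (fun s => IsOpen[sigT τ] s)
      (fun {s} hs => sigma_lower τ hs)
      (fun {s} hs => sigma_lowerW τ hs)
      (fun g {s} hs => @sigma_transl G _ τ hmul g s hs)
      hcl
  have hinvcont : @Continuous G G τ τ (fun x : G => x⁻¹) := by
    letI := τ
    haveI := hmul
    exact aux_continuous_inv hinv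
  exact ⟨⟨hinvcont⟩, hWτ⟩
end

section
/- Let G be a compact-bounded paratopological group such that K^{-1} is countably compact for every compact subset K of G. Then G is 2-pseudocompact: for every decreasing sequence (U_n) of non-empty open subsets of G, the intersection of the closures of the sets U_n^{-1} is non-empty. -/
open Set Topology TopologicalSpace

open Pointwise

def CountablyCompactIn {X : Type*} [TopologicalSpace X] (s : Set X) : Prop :=
  ∀ U : ℕ → Set X, (∀ n, IsOpen (U n)) → s ⊆ ⋃ n, U n →
    ∃ t : Finset ℕ, s ⊆ ⋃ n ∈ t, U n

theorem compactBounded_twoPseudocompact {G : Type*} [Group G] [TopologicalSpace G]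
    [ContinuousMul G] (hcb : CompactBounded G)
    (hK : ∀ K : Set G, IsCompact K → CountablyCompactIn (K⁻¹))
    (U : ℕ → Set G) (hop : ∀ n, IsOpen (U n)) (hne : ∀ n, (U n).Nonempty)
    (hdec : ∀ n, U (n + 1) ⊆ U n) :
    (⋂ n, closure ((U n)⁻¹)).Nonempty := by
  obtain ⟨K, hKc, hKU⟩ := hcb U hop hne
  have hmono : ∀ m n, n ≤ m → U m ⊆ U n := by
    intro m
    induction m with
    | zero => intro n h; simp_all
    | succ m ih =>
      intro n h
      rcases Nat.lt_or_ge n (m + 1) with h' | h'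
      · exact (hdec m).trans (ih n (Nat.lt_succ_iff.mp h'))
      · have : n = m + 1 := le_antisymm h h'
        subst this; exact subset_rfl
  by_contra hempty
  have hcover : K⁻¹ ⊆ ⋃ n, (closure ((U n)⁻¹))ᶜ := by
    intro x hx
    by_contra hx'
    simp only [mem_iUnion, mem_compl_iff, not_exists, not_not] at hx'
    exact hempty ⟨x, mem_iInter.mpr hx'⟩
  obtain ⟨t, ht⟩ := hK K hKc (fun n => (closure ((U n)⁻¹))ᶜ)
    (fun n => isClosed_closure.isOpen_compl) hcover
  set N := t.sup id with hN
  obtain ⟨k, hkK, hkU⟩ := hKU N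
  have hkinv : k⁻¹ ∈ K⁻¹ := by simpa using hkK
  obtain ⟨n, hnt, hn⟩ := mem_iUnion₂.mp (ht hkinv)
  have hnN : n ≤ N := Finset.le_sup (f := id) hnt
  have : k⁻¹ ∈ closure ((U n)⁻¹) := by
    apply subset_closure
    have : k ∈ U n := hmono N n hnN hkU
    simpa using this
  exact hn this
end

section
/- Let G be a topological group and H a compact subgroup of G. If the quotient space G/H is compact-bounded, then G is compact-bounded; likewise if G/H is weakly compact-bounded then G is weakly compact-bounded. -/
open Set Topology TopologicalSpace

open Pointwise in
lemma isProperMap_quotientGroup_mk {G : Type*} [Group G] [TopologicalSpace G]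
    [IsTopologicalGroup G] (H : Subgroup G) (hH : IsCompact (H : Set G)) :
    IsProperMap ((↑) : G → G ⧸ H) := by
  rw [isProperMap_iff_isClosedMap_and_compact_fibers]
  refine ⟨continuous_quotient_mk', QuotientGroup.isClosedMap_coe hH, fun y ↦ ?_⟩
  obtain ⟨g, rfl⟩ := QuotientGroup.mk_surjective y
  have : ((↑) : G → G ⧸ H) ⁻¹' {((g : G) : G ⧸ H)} =
      (({g} : Set G) * (H : Set G) : Set G) := by
    rw [← Set.image_singleton, QuotientGroup.preimage_image_mk_eq_mul]
  rw [this]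
  exact isCompact_singleton.mul hH

theorem quotient_compactBounded_of_compact_subgroup {G : Type*} [Group G] [TopologicalSpace G]
    [IsTopologicalGroup G] [T2Space G] (H : Subgroup G) (hH : IsCompact (H : Set G)) :
    (CompactBounded (G ⧸ H) → CompactBounded G) ∧
    (WeaklyCompactBounded (G ⧸ H) → WeaklyCompactBounded G) := by
  have hproper := isProperMap_quotientGroup_mk H hH
  have hopen : IsOpenMap ((↑) : G → G ⧸ H) := QuotientGroup.isOpenMap_coe
  constructor
  · intro hcb U hUopen hUne
    obtain ⟨K, hK, hKmeets⟩ := hcb (fun n ↦ ((↑) : G → G ⧸ H) '' U n)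
      (fun n ↦ hopen _ (hUopen n)) (fun n ↦ (hUne n).image _)
    refine ⟨((↑) : G → G ⧸ H) ⁻¹' K, hproper.isCompact_preimage hK, fun n ↦ ?_⟩
    obtain ⟨y, hyK, x, hxU, rfl⟩ := hKmeets n
    exact ⟨x, hyK, hxU⟩
  · intro hcb U hUopen hUne
    obtain ⟨K, hK, hKinf⟩ := hcb (fun n ↦ ((↑) : G → G ⧸ H) '' U n)
      (fun n ↦ hopen _ (hUopen n)) (fun n ↦ (hUne n).image _)
    refine ⟨((↑) : G → G ⧸ H) ⁻¹' K, hproper.isCompact_preimage hK, hKinf.mono ?_⟩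
    rintro n ⟨y, hyK, x, hxU, rfl⟩
    exact ⟨x, hyK, hxU⟩
end

section
/- Let G be a precompact topological group and H a locally compact subgroup of G. If G/H is compact-bounded (respectively weakly compact-bounded), then so is G. -/
open Set Topology TopologicalSpace

open Pointwise

lemma aux_compact_subgroup {G : Type*} [Group G] [TopologicalSpace G]
    [IsTopologicalGroup G]
    (hpc : ∀ U ∈ nhds (1 : G), ∃ F : Set G, F.Finite ∧ F * U = Set.univ ∧ U * F = Set.univ)
    (H : Subgroup G) (hH : LocallyCompactSpace H) : IsCompact (H : Set G) := by
  classical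
  obtain ⟨s, hs_nhds, -, hs_comp⟩ := hH.local_compact_nhds (1 : H) univ Filter.univ_mem
  set C : Set G := Subtype.val '' s with hCdef
  have hC : IsCompact C := hs_comp.image continuous_subtype_val
  have hCH : C ⊆ (H : Set G) := by rintro _ ⟨x, -, rfl⟩; exact x.2
  rw [nhds_subtype] at hs_nhds
  obtain ⟨V, hV, hVs⟩ := hs_nhds
  obtain ⟨W, hWopen, hW1, hWV⟩ := exists_open_nhds_one_mul_subset hV
  set W' : Set G := W ∩ W⁻¹ with hW'def
  have hW'mem : W' ∈ nhds (1 : G) := by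
    apply Filter.inter_mem (hWopen.mem_nhds hW1)
    exact (hWopen.inv).mem_nhds (by simpa using hW1)
  obtain ⟨F, hFfin, hFW, -⟩ := hpc W' hW'mem
  -- choice function
  have key : ∀ f : G, (∃ h : G, h ∈ H ∧ ∃ w ∈ W', h = f * w) →
      ∃ h : G, h ∈ H ∧ ∃ w ∈ W', h = f * w := fun _ h => h
  let ρ : G → G := fun f =>
    if hex : ∃ h : G, h ∈ H ∧ ∃ w ∈ W', h = f * w then hex.choose else 1
  have hρH : ∀ f, ρ f ∈ H := by
    intro f
    by_cases hex : ∃ h : G, h ∈ H ∧ ∃ w ∈ W', h = f * w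
    · simp only [ρ, dif_pos hex]; exact hex.choose_spec.1
    · simp only [ρ, dif_neg hex]; exact H.one_mem
  have hmain : (H : Set G) = ⋃ f ∈ F, ρ f • C := by
    apply Subset.antisymm
    · intro h hh
      have : h ∈ F * W' := by rw [hFW]; trivial
      obtain ⟨f, hf, w, hw, rfl⟩ := this
      have hex : ∃ h : G, h ∈ H ∧ ∃ w ∈ W', h = f * w := ⟨f * w, hh, w, hw, rfl⟩
      obtain ⟨hρmem, w', hw', hρeq⟩ : ρ f ∈ H ∧ ∃ w' ∈ W', ρ f = f * w' := by
        simp only [ρ, dif_pos hex]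
        exact ⟨hex.choose_spec.1, hex.choose_spec.2⟩
      have hV' : (ρ f)⁻¹ * (f * w) ∈ V := by
        rw [hρeq]
        have : (f * w')⁻¹ * (f * w) = w'⁻¹ * w := by group
        rw [this]
        exact hWV (Set.mul_mem_mul hw'.2 hw.1)
      have hHmem : (ρ f)⁻¹ * (f * w) ∈ H := H.mul_mem (H.inv_mem hρmem) hh
      have hCm : (ρ f)⁻¹ * (f * w) ∈ C :=
        ⟨⟨_, hHmem⟩, hVs hV', rfl⟩
      refine Set.mem_biUnion hf ?_
      exact ⟨(ρ f)⁻¹ * (f * w), hCm, by simp [smul_eq_mul, mul_inv_cancel_left]⟩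
    · refine Set.iUnion₂_subset fun f _ => ?_
      rintro _ ⟨c, hc, rfl⟩
      exact H.mul_mem (hρH f) (hCH hc)
  rw [hmain]
  exact hFfin.isCompact_biUnion fun f _ => hC.smul (ρ f)


def PrecompactGroup (G : Type*) [Group G] [TopologicalSpace G] : Prop :=
  ∀ U ∈ nhds (1 : G), ∃ F : Set G, F.Finite ∧ F * U = Set.univ ∧ U * F = Set.univ

theorem precompact_quotient_compactBounded {G : Type*} [Group G] [TopologicalSpace G]
    [IsTopologicalGroup G] [T2Space G] (hpc : PrecompactGroup G)
    (H : Subgroup G) (hH : LocallyCompactSpace H) :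
    (CompactBounded (G ⧸ H) → CompactBounded G) ∧
    (WeaklyCompactBounded (G ⧸ H) → WeaklyCompactBounded G) := by

  have hcomp : IsCompact (H : Set G) := aux_compact_subgroup hpc H hH
  have hproper : IsProperMap (QuotientGroup.mk : G → G ⧸ H) := by
    rw [isProperMap_iff_isClosedMap_and_compact_fibers]
    refine ⟨continuous_quotient_mk', QuotientGroup.isClosedMap_coe hcomp, ?_⟩
    intro y
    obtain ⟨g, rfl⟩ := QuotientGroup.mk_surjective y
    have : (QuotientGroup.mk : G → G ⧸ H) ⁻¹' {↑g} = {g} * (H : Set G) := by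
      rw [← Set.image_singleton, QuotientGroup.preimage_image_mk_eq_mul]
    rw [this, Set.singleton_mul]
    exact hcomp.image (continuous_mul_left g)
  have hopen : IsOpenMap (QuotientGroup.mk : G → G ⧸ H) :=
    QuotientGroup.isOpenQuotientMap_mk.isOpenMap
  constructor
  · intro hcb U hUopen hUne
    obtain ⟨K, hK, hKmeet⟩ := hcb (fun n => QuotientGroup.mk '' U n)
      (fun n => hopen _ (hUopen n)) (fun n => (hUne n).image _)
    refine ⟨QuotientGroup.mk ⁻¹' K, hproper.isCompact_preimage hK, fun n => ?_⟩
    obtain ⟨y, hyK, u, huU, rfl⟩ := hKmeet n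
    exact ⟨u, hyK, huU⟩
  · intro hcb U hUopen hUne
    obtain ⟨K, hK, hKinf⟩ := hcb (fun n => QuotientGroup.mk '' U n)
      (fun n => hopen _ (hUopen n)) (fun n => (hUne n).image _)
    refine ⟨QuotientGroup.mk ⁻¹' K, hproper.isCompact_preimage hK, ?_⟩
    refine hKinf.mono fun n hn => ?_
    obtain ⟨y, hyK, u, huU, rfl⟩ := hn
    exact ⟨u, hyK, huU⟩
end

section
/- If X is a scattered compact-bounded Tychonoff space, then the Stone–Čech compactification βX is scattered. -/
open Set Topology TopologicalSpace

def Scattered (X : Type*) [TopologicalSpace X] : Prop :=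
  ∀ S : Set X, S.Nonempty → ∃ x ∈ S, ∃ U : Set X, IsOpen U ∧ U ∩ S = {x}

section Aux

variable {Y : Type*} [TopologicalSpace Y] [CompactSpace Y] [T2Space Y]

/-- In a compact Hausdorff space, an open set containing two distinct points of `S`
can be split into two opens with disjoint closures, each meeting `S`. -/
lemma split_lemma (S : Set Y)
    (hS : ∀ V : Set Y, IsOpen V → (V ∩ S).Nonempty → ∃ x ∈ V ∩ S, ∃ y ∈ V ∩ S, x ≠ y)
    {V : Set Y} (hV : IsOpen V) (hne : (V ∩ S).Nonempty) :
    ∃ W : Bool → Set Y, (∀ b, IsOpen (W b)) ∧ (∀ b, ((W b) ∩ S).Nonempty) ∧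
      (∀ b, closure (W b) ⊆ V) ∧ Disjoint (closure (W false)) (closure (W true)) := by
  obtain ⟨x, hx, y, hy, hxy⟩ := hS V hV hne
  obtain ⟨A, B, hA, hB, hxA, hyB, hAB⟩ := t2_separation hxy
  obtain ⟨W0, hW0o, hxW0, hW0c⟩ := normal_exists_closure_subset (isClosed_singleton (x := x))
    (hV.inter hA) (by simp [hx.1, hxA])
  obtain ⟨W1, hW1o, hyW1, hW1c⟩ := normal_exists_closure_subset (isClosed_singleton (x := y))
    (hV.inter hB) (by simp [hy.1, hyB])
  refine ⟨fun b => if b then W1 else W0, fun b => by cases b <;> simpa,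
    fun b => by cases b <;> simp <;>
      [exact ⟨x, hxW0 rfl, hx.2⟩; exact ⟨y, hyW1 rfl, hy.2⟩], fun b => by
        cases b <;> simp <;>
          [exact hW0c.trans inter_subset_left; exact hW1c.trans inter_subset_left], ?_⟩
  simp only [if_pos, if_neg, Bool.false_eq_true, ite_false, ite_true]
  exact hAB.mono (hW0c.trans inter_subset_right) (hW1c.trans inter_subset_right)

/-- A Cantor scheme of open sets all meeting `S`. -/
noncomputable def scheme (S : Set Y)
    (hS : ∀ V : Set Y, IsOpen V → (V ∩ S).Nonempty → ∃ x ∈ V ∩ S, ∃ y ∈ V ∩ S, x ≠ y)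
    (hne : S.Nonempty) : List Bool → {U : Set Y // IsOpen U ∧ (U ∩ S).Nonempty} :=
  List.rec ⟨univ, isOpen_univ, by simpa using hne⟩
    (fun b _ p =>
      ⟨(split_lemma S hS p.2.1 p.2.2).choose b,
        (split_lemma S hS p.2.1 p.2.2).choose_spec.1 b,
        (split_lemma S hS p.2.1 p.2.2).choose_spec.2.1 b⟩)

lemma scheme_closure_subset (S : Set Y)
    (hS : ∀ V : Set Y, IsOpen V → (V ∩ S).Nonempty → ∃ x ∈ V ∩ S, ∃ y ∈ V ∩ S, x ≠ y)
    (hne : S.Nonempty) (b : Bool) (s : List Bool) :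
    closure (scheme S hS hne (b :: s)).1 ⊆ (scheme S hS hne s).1 :=
  (split_lemma S hS (scheme S hS hne s).2.1 (scheme S hS hne s).2.2).choose_spec.2.2.1 b

lemma scheme_disjoint (S : Set Y)
    (hS : ∀ V : Set Y, IsOpen V → (V ∩ S).Nonempty → ∃ x ∈ V ∩ S, ∃ y ∈ V ∩ S, x ≠ y)
    (hne : S.Nonempty) (s : List Bool) :
    Disjoint (closure (scheme S hS hne (false :: s)).1)
      (closure (scheme S hS hne (true :: s)).1) :=
  (split_lemma S hS (scheme S hS hne s).2.1 (scheme S hS hne s).2.2).choose_spec.2.2.2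

end Aux

theorem stoneCech_scattered {X : Type*} [TopologicalSpace X] [T35Space X]
    (hsc : Scattered X) (hcb : CompactBounded X) : Scattered (StoneCech X) := by
  by_contra hns
  rw [Scattered] at hns
  push_neg at hns
  obtain ⟨S, hSne, hSiso⟩ := hns
  -- every open set meeting S meets it in at least two points
  have hS : ∀ V : Set (StoneCech X), IsOpen V → (V ∩ S).Nonempty →
      ∃ x ∈ V ∩ S, ∃ y ∈ V ∩ S, x ≠ y := by
    rintro V hV ⟨x, hx⟩
    refine ⟨x, hx, ?_⟩
    by_contra hy
    push_neg at hy
    refine hSiso x hx.2 V hV (Subset.antisymm (fun z hz => ?_) (by simp [hx.1, hx.2]))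
    exact mem_singleton_iff.2 ((hy z hz).symm ▸ rfl)
  set Vf : List Bool → Set (StoneCech X) := fun s => (scheme S hS hSne s).1 with hVfdef
  obtain ⟨G, hG⟩ := exists_surjective_nat (List Bool)
  set U : ℕ → Set X := fun n => stoneCechUnit ⁻¹' (Vf (G n)) with hUdef
  have hUopen : ∀ n, IsOpen (U n) :=
    fun n => (scheme S hS hSne (G n)).2.1.preimage continuous_stoneCechUnit
  have hUne : ∀ n, (U n).Nonempty := by
    intro n
    obtain ⟨a, ha⟩ := denseRange_stoneCechUnit.exists_mem_open (scheme S hS hSne (G n)).2.1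
      ((scheme S hS hSne (G n)).2.2.mono inter_subset_left)
    exact ⟨a, ha⟩
  obtain ⟨K, hKc, hKU⟩ := hcb U hUopen hUne
  set K' : Set (StoneCech X) := stoneCechUnit '' K with hK'def
  have hK'c : IsCompact K' := hKc.image continuous_stoneCechUnit
  have hK'V : ∀ s, (K' ∩ Vf s).Nonempty := by
    intro s
    obtain ⟨n, rfl⟩ := hG s
    obtain ⟨a, haK, haU⟩ := hKU n
    exact ⟨stoneCechUnit a, ⟨a, haK, rfl⟩, haU⟩
  set F : Set (Set (StoneCech X)) :=
    {M | M ⊆ K' ∧ IsClosed M ∧ ∀ s, (M ∩ closure (Vf s)).Nonempty} with hFdef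
  have hK'F : K' ∈ F :=
    ⟨Subset.rfl, hK'c.isClosed,
      fun s => (hK'V s).mono (inter_subset_inter_right _ subset_closure)⟩
  have hchain : ∀ c ⊆ F, IsChain (· ⊆ ·) c → c.Nonempty → ∃ lb ∈ F, ∀ s ∈ c, lb ⊆ s := by
    intro c hcF hch hcne
    haveI : Nonempty c := hcne.to_subtype
    refine ⟨⋂₀ c, ⟨?_, ?_, ?_⟩, fun s hs => sInter_subset_of_mem hs⟩
    · obtain ⟨M, hM⟩ := hcne
      exact (sInter_subset_of_mem hM).trans (hcF hM).1
    · exact isClosed_sInter fun M hM => (hcF hM).2.1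
    · intro s
      have hint := IsCompact.nonempty_iInter_of_directed_nonempty_isCompact_isClosed
        (fun M : c => (M : Set (StoneCech X)) ∩ closure (Vf s))
        (fun M N => by
          rcases hch.total M.2 N.2 with h | h
          · exact ⟨M, le_refl _, inter_subset_inter_left _ h⟩
          · exact ⟨N, inter_subset_inter_left _ h, le_refl _⟩)
        (fun M => (hcF M.2).2.2 s)
        (fun M => hK'c.of_isClosed_subset ((hcF M.2).2.1.inter isClosed_closure)
          (inter_subset_left.trans (hcF M.2).1))
        (fun M => (hcF M.2).2.1.inter isClosed_closure)
      rwa [← iInter_inter, ← sInter_eq_iInter] at hint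
  obtain ⟨M, hMK', hMmin⟩ := zorn_superset_nonempty F hchain K' hK'F
  have hMF : M ∈ F := hMmin.prop
  set S' : Set X := stoneCechUnit ⁻¹' M with hS'def
  have hS'ne : S'.Nonempty := by
    obtain ⟨z, hzM, _⟩ := hMF.2.2 []
    obtain ⟨a, haK, rfl⟩ := hMF.1 hzM
    exact ⟨a, hzM⟩
  obtain ⟨a, haS', U0, hU0o, hU0⟩ := hsc S' hS'ne
  have haU0 : a ∈ U0 := by
    have : a ∈ U0 ∩ S' := by rw [hU0]; rfl
    exact this.1
  obtain ⟨f, hfc, hf0, hf1⟩ := CompletelyRegularSpace.completely_regular a U0ᶜ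
    hU0o.isClosed_compl (by simpa using haU0)
  set g : StoneCech X → unitInterval := stoneCechExtend hfc with hgdef
  set W : Set (StoneCech X) := g ⁻¹' {y : unitInterval | (y : ℝ) < 1} with hWdef
  have hWo : IsOpen W :=
    (isOpen_Iio.preimage continuous_subtype_val).preimage (continuous_stoneCechExtend hfc)
  have hgu : ∀ x : X, g (stoneCechUnit x) = f x := congrFun (stoneCechExtend_extends hfc)
  have haW : stoneCechUnit a ∈ W := by
    simp only [hWdef, mem_preimage, mem_setOf_eq, hgu, hf0]
    norm_num
  have hWU : stoneCechUnit ⁻¹' W ⊆ U0 := by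
    intro x hx
    by_contra hxU
    have h1 : f x = 1 := hf1 hxU
    simp only [hWdef, mem_preimage, mem_setOf_eq, hgu, h1] at hx
    norm_num at hx
  have hWM : W ∩ M = {stoneCechUnit a} := by
    apply Subset.antisymm
    · rintro z ⟨hzW, hzM⟩
      obtain ⟨c, hcK, rfl⟩ := hMF.1 hzM
      have hc : c ∈ U0 ∩ S' := ⟨hWU hzW, hzM⟩
      rw [hU0, mem_singleton_iff] at hc
      rw [hc]; rfl
    · rintro z hz
      rw [mem_singleton_iff] at hz
      subst hz
      exact ⟨haW, haS'⟩
  have hM' : M ∩ Wᶜ ∉ F := by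
    intro hmem
    have hsub := hMmin.2 hmem inter_subset_left
    have : stoneCechUnit a ∈ Wᶜ := (hsub haS').2
    exact this haW
  have hex : ∃ s, ((M ∩ Wᶜ) ∩ closure (Vf s)) = ∅ := by
    by_contra hall
    push_neg at hall
    exact hM' ⟨inter_subset_left.trans hMF.1,
      hMF.2.1.inter (isClosed_compl_iff.2 hWo),
      hall⟩
  obtain ⟨s, hs⟩ := hex
  have hsub : M ∩ closure (Vf s) ⊆ {stoneCechUnit a} := by
    rintro z ⟨hzM, hzV⟩
    have hzW : z ∈ W := by
      by_contra hzW
      have : z ∈ (M ∩ Wᶜ) ∩ closure (Vf s) := ⟨⟨hzM, hzW⟩, hzV⟩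
      rw [hs] at this
      exact this
    rw [← hWM]
    exact ⟨hzW, hzM⟩
  have hchild : ∀ b : Bool, stoneCechUnit a ∈ closure (Vf (b :: s)) := by
    intro b
    obtain ⟨z, hzM, hzV⟩ := hMF.2.2 (b :: s)
    have hz : z ∈ M ∩ closure (Vf s) :=
      ⟨hzM, subset_closure (scheme_closure_subset S hS hSne b s hzV)⟩
    have := hsub hz
    rw [mem_singleton_iff] at this
    rw [← this]
    exact hzV
  exact Set.disjoint_left.1 (scheme_disjoint S hS hSne s) (hchild false) (hchild true)
end

section
/- A subset A of a space X is strongly r-pseudocompact in X if and only if A × Y is r-pseudocompact in X × Y for every feebly compact space Y. -/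
open Set Topology TopologicalSpace

/-! ### Auxiliary construction -/

/-- The points of `B'` near which the family `W` accumulates. -/
def Bp {Y : Type} [TopologicalSpace Y] (B : Set Y) (W : ℕ → Set Y) : Set Y :=
  {y | y ∈ B ∧ ∀ N : Set Y, IsOpen N → y ∈ N → {n : ℕ | (W n ∩ N).Nonempty}.Infinite}

/-- Auxiliary carrier: a copy of `ℕ` together with the points of `B'`. -/
inductive ZSp {Y : Type} (B' : Set Y) (W : ℕ → Set Y) : Type where
  | nat : ℕ → ZSp B' W
  | pt : {y : Y // y ∈ B'} → ZSp B' W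

instance zTop {Y : Type} [TopologicalSpace Y] (B' : Set Y) (W : ℕ → Set Y) :
    TopologicalSpace (ZSp B' W) where
  IsOpen O := ∀ b : {y : Y // y ∈ B'}, ZSp.pt b ∈ O →
    ∃ N : Set Y, IsOpen N ∧ b.1 ∈ N ∧ ∀ n, (W n ∩ N).Nonempty → ZSp.nat n ∈ O
  isOpen_univ := fun _ _ => ⟨Set.univ, isOpen_univ, mem_univ _, fun _ _ => mem_univ _⟩
  isOpen_inter := by
    intro s t hs ht b hb
    obtain ⟨N1, h1o, h1m, h1⟩ := hs b hb.1
    obtain ⟨N2, h2o, h2m, h2⟩ := ht b hb.2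
    refine ⟨N1 ∩ N2, h1o.inter h2o, ⟨h1m, h2m⟩, fun n hn => ?_⟩
    exact ⟨h1 n (hn.mono (fun x hx => ⟨hx.1, hx.2.1⟩)),
           h2 n (hn.mono (fun x hx => ⟨hx.1, hx.2.2⟩))⟩
  isOpen_sUnion := by
    intro C hC b hb
    obtain ⟨s, hsC, hbs⟩ := hb
    obtain ⟨N, hNo, hNm, hN⟩ := hC s hsC b hbs
    exact ⟨N, hNo, hNm, fun n hn => ⟨s, hsC, hN n hn⟩⟩

theorem zOpen_iff {Y : Type} [TopologicalSpace Y] (B' : Set Y) (W : ℕ → Set Y)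
    (O : Set (ZSp B' W)) :
    IsOpen O ↔ ∀ b : {y : Y // y ∈ B'}, ZSp.pt b ∈ O →
      ∃ N : Set Y, IsOpen N ∧ b.1 ∈ N ∧ ∀ n, (W n ∩ N).Nonempty → ZSp.nat n ∈ O :=
  Iff.rfl

theorem zNatOpen {Y : Type} [TopologicalSpace Y] (B' : Set Y) (W : ℕ → Set Y)
    (T : Set ℕ) : IsOpen (ZSp.nat '' T : Set (ZSp B' W)) := by
  rw [zOpen_iff]
  rintro b ⟨n, -, h⟩
  exact absurd h (by simp)

theorem zFeebly {Y : Type} [TopologicalSpace Y] (B : Set Y) (W : ℕ → Set Y)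
    (hB : RPseudocompactIn B) (hWo : ∀ n, IsOpen (W n)) (hWB : ∀ n, (W n ∩ B).Nonempty) :
    FeeblyCompact (ZSp (Bp B W) W) := by
  intro S hS hloc
  by_contra hSinf
  rw [← Set.not_infinite, not_not] at hSinf
  obtain e := hSinf.natEmbedding
  set O : ℕ → Set (ZSp (Bp B W) W) := fun j => (e j : Set (ZSp (Bp B W) W)) with hO
  have hOinj : Function.Injective O := fun a b hab => e.injective (Subtype.ext hab)
  have hOS : ∀ j, O j ∈ S := fun j => (e j).2
  -- every member of the family contains some `nat n`
  have hpick : ∀ j, ∃ n, ZSp.nat n ∈ O j := by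
    intro j
    obtain ⟨z, hz⟩ := (hS _ (hOS j)).2
    cases z with
    | nat n => exact ⟨n, hz⟩
    | pt b =>
      obtain ⟨N, hNo, hNm, hNsub⟩ := ((zOpen_iff _ _ _).mp (hS _ (hOS j)).1) b hz
      obtain ⟨n, hn⟩ := (b.2.2 N hNo hNm).nonempty
      exact ⟨n, hNsub n hn⟩
  choose nj hnj using hpick
  by_cases hm : ∃ m : ℕ, {j | ZSp.nat m ∈ O j}.Infinite
  · obtain ⟨m, hminf⟩ := hm
    obtain ⟨V, hV, hfin⟩ := hloc (ZSp.nat m)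
    refine (hminf.image (hOinj.injOn)) (hfin.subset ?_)
    rintro _ ⟨j, hj, rfl⟩
    exact ⟨hOS j, ⟨ZSp.nat m, hj, mem_of_mem_nhds hV⟩⟩
  · push_neg at hm
    have hmfin : ∀ m, {j | ZSp.nat m ∈ O j}.Finite := fun m => hm m
    obtain ⟨bs, hbsB, hacc⟩ := hB (fun j => W (nj j)) (fun j => hWo _) (fun j => hWB _)
    have hbsp : bs ∈ Bp B W := by
      refine ⟨hbsB, fun N hNo hNm => ?_⟩
      by_contra hfin'
      rw [Set.not_infinite] at hfin'
      have hJ : {j | (W (nj j) ∩ N).Nonempty}.Infinite := hacc N (hNo.mem_nhds hNm)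
      refine hJ ?_
      have hsub : {j | (W (nj j) ∩ N).Nonempty} ⊆
          ⋃ m ∈ {n : ℕ | (W n ∩ N).Nonempty}, {j | nj j = m} :=
        fun j hj => mem_biUnion hj rfl
      refine (Set.Finite.biUnion hfin' (fun m _ => ?_)).subset hsub
      exact (hmfin m).subset (fun j (hjm : nj j = m) => by
        have := hnj j; rwa [hjm] at this)
    obtain ⟨V, hV, hfin⟩ := hloc (ZSp.pt ⟨bs, hbsp⟩)
    obtain ⟨O₀, hO₀sub, hO₀open, hz⟩ := mem_nhds_iff.mp hV
    obtain ⟨N₀, hN₀o, hN₀m, hN₀sub⟩ := ((zOpen_iff _ _ _).mp hO₀open) ⟨bs, hbsp⟩ hz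
    have hJ₀ : {j | (W (nj j) ∩ N₀).Nonempty}.Infinite := hacc N₀ (hN₀o.mem_nhds hN₀m)
    refine (hJ₀.image (hOinj.injOn)) (hfin.subset ?_)
    rintro _ ⟨j, hj, rfl⟩
    exact ⟨hOS j, ⟨ZSp.nat (nj j), hnj j, hO₀sub (hN₀sub _ hj)⟩⟩

theorem stronglyRPseudocompact_iff_feebly {X : Type*} [TopologicalSpace X] (A : Set X) :
    StronglyRPseudocompactIn A ↔
      ∀ (Y : Type) [TopologicalSpace Y], FeeblyCompact Y →
        RPseudocompactIn (A ×ˢ (Set.univ : Set Y)) := by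
  constructor
  · -- forward: feebly compact ⇒ univ is r-pseudocompact
    intro hstrong Y _ hY
    refine hstrong Y Set.univ ?_
    intro U hUo hUne
    by_contra hc
    push_neg at hc
    have hc' : ∀ y : Y, ∃ V ∈ nhds y, {n : ℕ | (U n ∩ V).Nonempty}.Finite := by
      intro y
      obtain ⟨V, hV, hfin⟩ := hc y (mem_univ y)
      exact ⟨V, hV, hfin⟩
    have hrange : (Set.range U).Finite := by
      refine hY (Set.range U) ?_ ?_
      · rintro _ ⟨n, rfl⟩
        exact ⟨hUo n, by simpa using hUne n⟩
      · intro y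
        obtain ⟨V, hV, hfin⟩ := hc' y
        refine ⟨V, hV, ?_⟩
        have : {T ∈ Set.range U | (T ∩ V).Nonempty} ⊆ U '' {n | (U n ∩ V).Nonempty} := by
          rintro _ ⟨⟨n, rfl⟩, hne⟩
          exact ⟨n, hne, rfl⟩
        exact (hfin.image U).subset this
    have hfiber : ∃ T ∈ Set.range U, {n | U n = T}.Infinite := by
      by_contra hcon
      push_neg at hcon
      have hsub : (Set.univ : Set ℕ) ⊆ ⋃ T ∈ Set.range U, {n | U n = T} :=
        fun n _ => mem_biUnion ⟨n, rfl⟩ rfl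
      exact Set.infinite_univ
        ((hrange.biUnion (fun T hT => hcon T hT)).subset hsub)
    obtain ⟨T, hTmem, hTinf⟩ := hfiber
    obtain ⟨n₀, rfl⟩ := hTmem
    obtain ⟨y, hy⟩ : (U n₀).Nonempty := by simpa using hUne n₀
    obtain ⟨V, hV, hfin⟩ := hc' y
    refine hTinf (hfin.subset ?_)
    intro n (hn : U n = U n₀)
    exact ⟨y, by rw [hn]; exact hy, mem_of_mem_nhds hV⟩
  · -- backward
    intro h Y _ B hB U hUo hUne
    choose q hq using hUne
    have hqU : ∀ n, ((q n).1, (q n).2) ∈ U n := fun n => (hq n).1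
    have hqA : ∀ n, (q n).1 ∈ A := fun n => (hq n).2.1
    have hqB : ∀ n, (q n).2 ∈ B := fun n => (hq n).2.2
    choose V W hVo hWo hxV hyW hVWsub using
      fun n => (isOpen_prod_iff.mp (hUo n)) (q n).1 (q n).2 (hqU n)
    have hWB : ∀ n, (W n ∩ B).Nonempty := fun n => ⟨(q n).2, hyW n, hqB n⟩
    have hfc : FeeblyCompact (ZSp (Bp B W) W) := zFeebly B W hB hWo hWB
    have happ := h (ZSp (Bp B W) W) hfc
    set G : ℕ → Set (X × ZSp (Bp B W) W) :=
      fun n => V n ×ˢ (ZSp.nat '' {n} : Set (ZSp (Bp B W) W)) with hG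
    have hGo : ∀ n, IsOpen (G n) := fun n => (hVo n).prod (zNatOpen _ _ _)
    have hGne : ∀ n, (G n ∩ (A ×ˢ (Set.univ : Set (ZSp (Bp B W) W)))).Nonempty := by
      intro n
      exact ⟨((q n).1, ZSp.nat n), ⟨hxV n, ⟨n, rfl, rfl⟩⟩, ⟨hqA n, mem_univ _⟩⟩
    obtain ⟨⟨a, z⟩, hmem, hacc⟩ := happ G hGo hGne
    have ha : a ∈ A := hmem.1
    cases z with
    | nat m =>
      exfalso
      have hnb : (Set.univ ×ˢ (ZSp.nat '' {m} : Set (ZSp (Bp B W) W))) ∈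
          nhds ((a, ZSp.nat m) : X × ZSp (Bp B W) W) :=
        (isOpen_univ.prod (zNatOpen _ _ _)).mem_nhds ⟨mem_univ _, ⟨m, rfl, rfl⟩⟩
      refine hacc _ hnb ((Set.finite_singleton m).subset ?_)
      intro n hn
      obtain ⟨⟨p, z'⟩, hG1, hG2⟩ := hn
      have h1 : z' = ZSp.nat n := by
        obtain ⟨n', hn', hz1⟩ := hG1.2
        rw [mem_singleton_iff] at hn'
        subst hn'
        exact hz1.symm
      have h2 : z' = ZSp.nat m := by
        obtain ⟨m', hm', hz2⟩ := hG2.2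
        rw [mem_singleton_iff] at hm'
        subst hm'
        exact hz2.symm
      rw [h1] at h2
      exact mem_singleton_iff.mpr (ZSp.nat.inj h2)
    | pt b =>
      refine ⟨(a, b.1), ⟨ha, b.2.1⟩, ?_⟩
      intro Vnb hVnb
      rw [mem_nhds_prod_iff] at hVnb
      obtain ⟨u, hu, v, hv, huv⟩ := hVnb
      obtain ⟨N, hNsubv, hNo, hNb⟩ := mem_nhds_iff.mp hv
      set T : Set (ZSp (Bp B W) W) :=
        {ZSp.pt b} ∪ ZSp.nat '' {n | (W n ∩ N).Nonempty} with hT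
      have hTopen : IsOpen T := by
        rw [zOpen_iff]
        intro b' hb'
        have hb'b : b' = b := by
          rcases hb' with hb' | ⟨n, -, hn⟩
          · exact ZSp.pt.inj hb'
          · exact absurd hn (by simp)
        subst hb'b
        exact ⟨N, hNo, hNb, fun n hn => Or.inr ⟨n, hn, rfl⟩⟩
      have hTn : T ∈ nhds (ZSp.pt b : ZSp (Bp B W) W) := hTopen.mem_nhds (Or.inl rfl)
      have huT : u ×ˢ T ∈ nhds ((a, ZSp.pt b) : X × ZSp (Bp B W) W) :=
        mem_nhds_prod_iff.mpr ⟨u, hu, T, hTn, subset_rfl⟩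
      refine (hacc _ huT).mono ?_
      intro n hn
      obtain ⟨⟨p, z'⟩, hG1, hG2⟩ := hn
      obtain ⟨hpVn, hz'img⟩ := hG1
      obtain ⟨hpu, hz'T⟩ := hG2
      have hz' : z' = ZSp.nat n := by
        obtain ⟨n', hn', hz1⟩ := hz'img
        rw [mem_singleton_iff] at hn'
        subst hn'
        exact hz1.symm
      rw [hz'] at hz'T
      have hWN : (W n ∩ N).Nonempty := by
        rcases hz'T with hc | ⟨n'', hn'', hc⟩
        · exact absurd hc (by simp)
        · rwa [← ZSp.nat.inj hc]
      obtain ⟨y', hy'W, hy'N⟩ := hWN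
      exact ⟨(p, y'), hVWsub n ⟨hpVn, hy'W⟩, huv ⟨hpu, hNsubv hy'N⟩⟩
end

section
/- Every r-weakly compact-bounded subset A of a topological space X is strongly r-pseudocompact in X. -/
open Set Topology TopologicalSpace

theorem rwcb_implies_stronglyRPseudocompact {X : Type*} [TopologicalSpace X] (A : Set X)
    (h : RWeaklyCompactBoundedIn A) : StronglyRPseudocompactIn A := by
  intro Y _ B hB U hUo hUne
  -- pick points in U n ∩ (A ×ˢ B)
  choose p hpU hpAB using hUne
  have hpA : ∀ n, (p n).1 ∈ A := fun n => (hpAB n).1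
  have hpB : ∀ n, (p n).2 ∈ B := fun n => (hpAB n).2
  -- rectangles inside U n
  choose V W hVo hWo hpV hpW hsub using fun n =>
    (isOpen_prod_iff.mp (hUo n)) (p n).1 (p n).2 (hpU n)
  -- apply r-weak compact boundedness to the V's
  obtain ⟨K, hKA, hKc, hI⟩ := h V hVo (fun n => ⟨(p n).1, hpV n, hpA n⟩)
  -- enumerate infinitely many indices where V n meets K
  let e := hI.natEmbedding
  have hein : ∀ k, ((e k : ℕ) ∈ {n : ℕ | (V n ∩ K).Nonempty}) := fun k => (e k).2
  -- apply r-pseudocompactness of B to the corresponding W's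
  obtain ⟨b, hbB, hb⟩ := hB (fun k => W (e k)) (fun k => hWo _)
    (fun k => ⟨(p (e k)).2, hpW _, hpB _⟩)
  by_contra hcon
  push_neg at hcon
  have key : ∀ a ∈ K, ∃ P : Set X, ∃ Q : Set Y, P ∈ nhds a ∧ Q ∈ nhds b ∧
      {n : ℕ | (U n ∩ P ×ˢ Q).Nonempty}.Finite := by
    intro a ha
    obtain ⟨V', hV', hfin⟩ := hcon (a, b) ⟨hKA ha, hbB⟩
    obtain ⟨P, hP, Q, hQ, hPQ⟩ := mem_nhds_prod_iff.mp hV'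
    exact ⟨P, Q, hP, hQ, hfin.subset fun n ⟨z, hz1, hz2⟩ =>
      ⟨z, hz1, hPQ hz2⟩⟩
  choose! P Q hP hQ hfin using key
  obtain ⟨t, htK, hcov⟩ := hKc.elim_nhds_subcover P hP
  have hQb : (⋂ a ∈ t, Q a) ∈ nhds b :=
    (Filter.biInter_finset_mem t).mpr fun a ha => hQ a (htK a ha)
  have hinf := hb _ hQb
  have himg : ((fun k => (e k : ℕ)) '' {k : ℕ | (W (e k) ∩ ⋂ a ∈ t, Q a).Nonempty}).Infinite :=
    hinf.image (Set.injOn_of_injective (fun k₁ k₂ hk =>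
      e.injective (Subtype.ext hk)))
  have hsubfin : ((fun k => (e k : ℕ)) '' {k : ℕ | (W (e k) ∩ ⋂ a ∈ t, Q a).Nonempty}) ⊆
      ⋃ a ∈ t, {n : ℕ | (U n ∩ P a ×ˢ Q a).Nonempty} := by
    rintro n ⟨k, hk, rfl⟩
    obtain ⟨x, hxV, hxK⟩ := hein k
    obtain ⟨a, ha, hxP⟩ := Set.mem_iUnion₂.mp (hcov hxK)
    obtain ⟨y, hyW, hyQ⟩ := hk
    refine Set.mem_iUnion₂.mpr ⟨a, ha, ⟨(x, y), hsub _ ⟨hxV, hyW⟩, hxP, ?_⟩⟩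
    exact Set.mem_iInter₂.mp hyQ a ha
  exact himg ((((t.finite_toSet).biUnion fun a ha => hfin a (htK a ha)).subset hsubfin))
end

section
/- If A_i is r-weakly compact-bounded in X_i for each i ∈ ω, then the product ∏_{i∈ω} A_i is r-weakly compact-bounded in ∏_{i∈ω} X_i. -/
open Set Topology TopologicalSpace

theorem rwcb_countable_product {X : ℕ → Type*} [∀ i, TopologicalSpace (X i)]
    (A : ∀ i, Set (X i)) (h : ∀ i, RWeaklyCompactBoundedIn (A i)) :
    RWeaklyCompactBoundedIn (Set.univ.pi A) := by

  classical
  intro U hUopen hUne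
  choose p hp using hUne
  have hbasic : ∀ n, ∃ (I : Finset ℕ) (u : ∀ i, Set (X i)),
      (∀ i, i ∈ I → IsOpen (u i) ∧ p n i ∈ u i) ∧ (I : Set ℕ).pi u ⊆ U n := fun n =>
    (isOpen_pi_iff.mp (hUopen n)) (p n) (hp n).1
  choose I u hIu hIsub using hbasic
  set W : ℕ → ∀ i, Set (X i) := fun n i => if i ∈ I n then u n i else Set.univ with hW
  have hWopen : ∀ n i, IsOpen (W n i) := by
    intro n i
    by_cases hi : i ∈ I n
    · simpa [hW, hi] using (hIu n i hi).1
    · simp [hW, hi]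
  have hWmem : ∀ n i, p n i ∈ W n i := by
    intro n i
    by_cases hi : i ∈ I n
    · simpa [hW, hi] using (hIu n i hi).2
    · simp [hW, hi]
  have hWA : ∀ n i, (W n i ∩ A i).Nonempty := fun n i =>
    ⟨p n i, hWmem n i, (hp n).2 i trivial⟩
  -- one step of the recursion: handle coordinate i within an infinite index set N
  have step : ∀ (i : ℕ) (N : Set ℕ), N.Infinite →
      ∃ (K : Set (X i)) (N' : Set ℕ), K ⊆ A i ∧ IsCompact K ∧ N' ⊆ N ∧ N'.Infinite ∧
        ∀ n ∈ N', (W n i ∩ K).Nonempty := by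
    intro i N hN
    set e := Set.Infinite.natEmbedding N hN with he
    obtain ⟨K, hKA, hKc, hKinf⟩ := h i (fun k => W (e k : ℕ) i)
      (fun k => hWopen _ i) (fun k => hWA _ i)
    refine ⟨K, (fun k => (e k : ℕ)) '' {k | (W (e k : ℕ) i ∩ K).Nonempty}, hKA, hKc, ?_, ?_, ?_⟩
    · rintro _ ⟨k, -, rfl⟩; exact (e k).2
    · exact hKinf.image (Set.injOn_of_injective (Subtype.val_injective.comp e.injective))
    · rintro _ ⟨k, hk, rfl⟩; exact hk
  choose sK sN hKA hKc hNsub hNinf hmeet using step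
  -- the chain of index sets
  let g : ℕ → {N : Set ℕ // N.Infinite} := fun i =>
    Nat.rec ⟨Set.univ, Set.infinite_univ⟩
      (fun i acc => ⟨sN i acc.1 acc.2, hNinf i acc.1 acc.2⟩) i
  set Kc : ∀ i, Set (X i) := fun i => sK i (g i).1 (g i).2 with hKcdef
  have hgsucc : ∀ i, (g (i + 1)).1 = sN i (g i).1 (g i).2 := fun i => rfl
  have hsub1 : ∀ i, (g (i + 1)).1 ⊆ (g i).1 := fun i => hNsub i (g i).1 (g i).2
  have hmono : ∀ j k, j ≤ k → (g k).1 ⊆ (g j).1 := by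
    intro j k hjk
    induction hjk with
    | refl => exact subset_rfl
    | step _ ih => exact (hsub1 _).trans ih
  have hKmeet : ∀ i, ∀ n ∈ (g (i + 1)).1, (W n i ∩ Kc i).Nonempty := fun i =>
    hmeet i (g i).1 (g i).2
  -- choose a strictly increasing sequence t with t k ∈ g (k+1)
  have hpick : ∀ (k b : ℕ), ∃ m, m ∈ (g (k + 1)).1 ∧ b < m := by
    intro k b
    obtain ⟨m, hm, hbm⟩ := (g (k + 1)).2.exists_gt b
    exact ⟨m, hm, hbm⟩
  choose pick hpickmem hpickgt using hpick
  let t : ℕ → ℕ := fun k => Nat.rec (pick 0 0) (fun k acc => pick (k + 1) acc) k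
  have htmem : ∀ k, t k ∈ (g (k + 1)).1 := by
    intro k
    cases k with
    | zero => exact hpickmem 0 0
    | succ k => exact hpickmem (k + 1) (t k)
  have htmono : StrictMono t := strictMono_nat_of_lt_succ fun k => hpickgt (k + 1) (t k)
  -- the compact set
  set F : ∀ i, Set (X i) := fun i => (fun k => p (t k) i) '' Set.Iio i with hF
  set K' : ∀ i, Set (X i) := fun i => Kc i ∪ F i with hK'
  have hK'A : ∀ i, K' i ⊆ A i := by
    intro i x hx
    rcases hx with hx | ⟨k, -, rfl⟩
    · exact hKA i (g i).1 (g i).2 hx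
    · exact (hp (t k)).2 i trivial
  have hK'c : ∀ i, IsCompact (K' i) :=
    fun i => (hKc i (g i).1 (g i).2).union (((Set.finite_Iio i).image _).isCompact)
  refine ⟨Set.univ.pi K', fun x hx i _ => hK'A i (hx i trivial), isCompact_univ_pi hK'c, ?_⟩
  have key : ∀ k, (U (t k) ∩ Set.univ.pi K').Nonempty := by
    intro k
    have hsel : ∀ j, j ≤ k → (W (t k) j ∩ Kc j).Nonempty := fun j hj =>
      hKmeet j (t k) (hmono (j + 1) (k + 1) (Nat.succ_le_succ hj) (htmem k))
    choose y hyW hyK using hsel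
    set x : ∀ j, X j := fun j =>
      if hj : j ≤ k then y j hj else p (t k) j with hxdef
    refine ⟨x, hIsub (t k) ?_, ?_⟩
    · intro j hj
      simp only [Finset.mem_coe] at hj
      by_cases hjk : j ≤ k
      · have := hyW j hjk
        simp only [hW, hj, if_true] at this
        simpa [hxdef, hjk] using this
      · have := (hIu (t k) j hj).2
        simpa [hxdef, hjk] using this
    · intro j _
      by_cases hjk : j ≤ k
      · exact Or.inl (by simpa [hxdef, hjk] using hyK j hjk)
      · exact Or.inr ⟨k, Set.mem_Iio.mpr (by omega), by simp [hxdef, hjk]⟩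
  exact Set.infinite_of_injective_forall_mem htmono.injective fun k => key k
end
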